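/- arXiv:1704.07860 — 7 statements merged into one kernel-verified Lean document; each statement's English description precedes it below -/
import Mathlib

section
/- For all positive integers k and n with k, n > 1, the word W_{k,n} equals W_{k,n-1} a_n W_{k-1,n-1} a_n W_{k-2,n-1} a_n ⋯ a_n W_{1,n-1} a_n, i.e., W_{k,n} is the concatenation over i = 0, 1, ..., k-1 of W_{k-i,n-1} · a_n. -/
/-- The word `W k n` over alphabet {1,...,n} (letter `a_i` encoded as `i`):
`W k 1 = a1^k`, `W 1 n = a1 a2 ... an`, `W k n = W k (n-1) ++ [a_n] ++ W (k-1) n`,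
and `W k n = ε` when `k = 0` or `n = 0`. -/
def W : ℕ → ℕ → List ℕ
  | 0, _ => []
  | _+1, 0 => []
  | k+1, n+1 => W (k+1) n ++ (n+1) :: W k (n+1)
termination_by k n => k + n

theorem W_zero_left (n : ℕ) : W 0 n = [] := by
  rw [W]

theorem W_succ_succ (k n : ℕ) : W (k + 1) (n + 1) = W (k + 1) n ++ (n + 1) :: W k (n + 1) := by
  rw [W]

theorem W_succ_right_eq_flatten (k n : ℕ) :
    W k (n + 1) = ((List.range k).map fun i => W (k - i) n ++ [n + 1]).flatten := by
  induction k with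
  | zero => simp only [W_zero_left, List.range_zero, List.map_nil, List.flatten_nil]
  | succ k ih =>
    rw [W_succ_succ, ih, List.range_succ_eq_map]
    simp [Function.comp_def]

theorem stmt_2_general (k n : ℕ) (hn : 1 < n) :
    W k n = (((List.range k).map fun i => W (k - i) (n - 1) ++ [n])).flatten := by
  obtain ⟨m, rfl⟩ : ∃ m, n = m + 1 := ⟨n - 1, by omega⟩
  exact W_succ_right_eq_flatten k m

/-- For `k, n > 1`, `W_{k,n}` is the concatenation over `i = 0, ..., k-1` of
`W_{k-i, n-1} · a_n`. -/
theorem stmt_2 (k n : ℕ) (hk : 1 < k) (hn : 1 < n) :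
    W k n = (((List.range k).map fun i => W (k - i) (n - 1) ++ [n])).flatten :=
  stmt_2_general k n hn
end

section
/- For all positive integers k, n and all i ∈ {1, ..., n} and ℓ ∈ {0, ..., k-1}, every maximal factor of W_{k,n} over the subalphabet {a_1, ..., a_i} (i.e., a factor over {a_1,...,a_i} that cannot be extended in W_{k,n} by letters from {a_1,...,a_i}) is of the form W_{k-ℓ, i} for some ℓ ∈ {0, ..., k-1}. -/
theorem le_of_mem_W {k n c : ℕ} (hc : c ∈ W k n) : c ≤ n := by
  induction k, n using W.induct with
  | case1 | case2 => simp [W] at hc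
  | case3 k n ih₁ ih₂ =>
    rw [W] at hc
    rcases List.mem_append.mp hc with h | h | ⟨_, h⟩
    · exact (ih₁ h).trans n.le_succ
    · exact le_rfl
    · exact ih₂ h

theorem List.append_cons_eq_append_append_of_not_mem {α : Type*} {A B x f z : List α} {s : α}
    (h : A ++ s :: B = x ++ f ++ z) (hs : s ∉ f) :
    (∃ z', A = x ++ f ++ z' ∧ z = z' ++ s :: B) ∨ ∃ x', x = A ++ s :: x' ∧ B = x' ++ f ++ z := by
  rw [List.append_assoc, List.append_eq_append_iff] at h
  rcases h with ⟨c, rfl, hc⟩ | ⟨a, rfl, ha⟩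
  · rcases List.cons_eq_append_iff.mp hc with ⟨rfl, hfz⟩ | ⟨c', rfl, rfl⟩
    · rcases List.append_eq_cons_iff.mp hfz with ⟨rfl, rfl⟩ | ⟨f', rfl, -⟩
      · exact .inl ⟨[], by simp, rfl⟩
      · simp at hs
    · exact .inr ⟨c', rfl, by simp⟩
  · rcases List.append_eq_append_iff.mp ha with ⟨b, rfl, rfl⟩ | ⟨b, rfl, hb⟩
    · exact .inl ⟨b, by simp, rfl⟩
    · rcases List.cons_eq_append_iff.mp hb with ⟨rfl, rfl⟩ | ⟨b', rfl, -⟩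
      · exact .inl ⟨[], by simp, rfl⟩
      · simp at hs

theorem stmt_5_general (k n : ℕ) (i : ℕ)
    (hin : i ≤ n) (x f z : List ℕ) (hsplit : W k n = x ++ f ++ z)
    (hne : f ≠ [])
    (hsub : ∀ c ∈ f, c ≤ i)
    (hx : ∀ c ∈ x.getLast?, i < c)
    (hz : ∀ c ∈ z.head?, i < c) :
    ∃ ℓ, ℓ < k ∧ f = W (k - ℓ) i := by
  induction k, n using W.induct generalizing x f z with
  | case1 | case2 => simp [W, hne] at hsplit
  | case3 k n ih_left ih_right =>
    rcases hin.eq_or_lt with rfl | hin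
    · have hle : ∀ c ∈ x ++ f ++ z, c ≤ n + 1 := fun c hc => le_of_mem_W (hsplit ▸ hc)
      have hx_nil : x = [] := List.getLast?_eq_none_iff.mp <| Option.eq_none_iff_forall_not_mem.mpr
        fun c hc => (hx c hc).not_ge <| hle c <| by simp [List.mem_of_mem_getLast? hc]
      have hz_nil : z = [] := List.head?_eq_none_iff.mp <| Option.eq_none_iff_forall_not_mem.mpr
        fun c hc => (hz c hc).not_ge <| hle c <| by simp [List.mem_of_mem_head? hc]
      exact ⟨0, k.succ_pos, by simpa [hx_nil, hz_nil] using hsplit.symm⟩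
    · rw [W] at hsplit
      rcases List.append_cons_eq_append_append_of_not_mem hsplit (fun h => (hsub _ h).not_gt hin)
        with ⟨z', hleft, rfl⟩ | ⟨x', rfl, hright⟩
      · exact ih_left (by omega) _ _ _ hleft hne hsub hx
          fun c hc => hz c (List.mem_head?_append_of_mem_head? hc)
      · obtain ⟨ℓ, hℓ, rfl⟩ := ih_right hin.le _ _ _ hright hne hsub
          (fun c hc => hx c (List.mem_getLast?_append_of_mem_getLast? (List.mem_getLast?_cons hc))) hz
        exact ⟨ℓ + 1, by omega, by simp⟩

/-- Every maximal (nonempty) factor of `W_{k,n}` over the subalphabet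
`{a_1, ..., a_i}` — a factor over `{a_1,...,a_i}` that cannot be extended in
`W_{k,n}` by letters from `{a_1,...,a_i}` — equals `W_{k-ℓ, i}` for some
`ℓ ∈ {0, ..., k-1}`. -/
theorem stmt_5 (k n : ℕ) (hk : 1 ≤ k) (hn : 1 ≤ n) (i : ℕ) (hi : 1 ≤ i)
    (hin : i ≤ n) (x f z : List ℕ) (hsplit : W k n = x ++ f ++ z)
    (hne : f ≠ [])
    (hsub : ∀ c ∈ f, c ≤ i)
    (hx : ∀ c ∈ x.getLast?, i < c)
    (hz : ∀ c ∈ z.head?, i < c) :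
    ∃ ℓ, ℓ < k ∧ f = W (k - ℓ) i :=
  stmt_5_general k n i hin x f z hsplit hne hsub hx hz
end

section
/- For all positive integers k and n with k, n ≥ 1, there exists a complete, partially ordered, self-loop deterministic and confluent NFA (ptNFA) A_{k,n} over the n-letter alphabet {a_1,...,a_n} with exactly n(2k+1)+1 states whose language is Σ_n* \ {W_{k,n}}, i.e., it accepts every word except the single word W_{k,n} of length binomial(k+n,n) - 1. -/
/-- Reachability between states of an NFA: `p ≤ q` iff `q ∈ p·w` for some word `w`. -/
def nfaReach {α σ : Type*} (M : NFA α σ) (p q : σ) : Prop :=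
  ∃ w : List α, q ∈ M.evalFrom {p} w

/-- An NFA is partially ordered (a poNFA) if reachability is a partial order,
equivalently (reflexivity and transitivity being automatic) antisymmetric. -/
def PartiallyOrderedNFA {α σ : Type*} (M : NFA α σ) : Prop :=
  ∀ p q, nfaReach M p q → nfaReach M q p → p = q

/-- An NFA is complete if every state has a transition under every letter. -/
def CompleteNFA {α σ : Type*} (M : NFA α σ) : Prop :=
  ∀ q a, (M.step q a).Nonempty

/-- Self-loop determinism: if `q ∈ q·a` then `q·a = {q}`. -/
def SelfLoopDet {α σ : Type*} (M : NFA α σ) : Prop :=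
  ∀ q a, q ∈ M.step q a → M.step q a = {q}

/-- Confluence: for every state `q` and letters `a, b`, any `s ∈ q·a`, `t ∈ q·b`
can be joined: there is `w ∈ {a,b}*` with `s·w ∩ t·w ≠ ∅`. -/
def ConfluentNFA {α σ : Type*} (M : NFA α σ) : Prop :=
  ∀ q (a b : α), ∀ s ∈ M.step q a, ∀ t ∈ M.step q b,
    ∃ w : List α, (∀ c ∈ w, c = a ∨ c = b) ∧
      (M.evalFrom {s} w ∩ M.evalFrom {t} w).Nonempty

/-- The self-loop alphabet `Σ(q) = {a : q ∈ q·a}` of a state `q`. -/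
def slAlph {α σ : Type*} (M : NFA α σ) (q : σ) : Set α := {a | q ∈ M.step q a}

/-- One-step edge relation of the graph `G(M, Γ)` of transitions labeled in `Γ`. -/
def stepRel {α σ : Type*} (M : NFA α σ) (Γ : Set α) (p q : σ) : Prop :=
  ∃ a ∈ Γ, q ∈ M.step p a

/-- Reachability in the graph `G(M, Γ)`. -/
def reachIn {α σ : Type*} (M : NFA α σ) (Γ : Set α) : σ → σ → Prop :=
  Relation.ReflTransGen (stepRel M Γ)

/-- Being in the same (weakly) connected component of `G(M, Γ)`. -/
def inComp {α σ : Type*} (M : NFA α σ) (Γ : Set α) : σ → σ → Prop :=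
  Relation.ReflTransGen (fun p q => stepRel M Γ p q ∨ stepRel M Γ q p)

/-- `p` is a maximal state of the connected component of `G(M, Γ)` containing `q`. -/
def MaximalInComp {α σ : Type*} (M : NFA α σ) (Γ : Set α) (q p : σ) : Prop :=
  inComp M Γ q p ∧ ∀ r, reachIn M Γ p r → r = p

/-- The unique maximal state (UMS) property: every state `q` is the unique maximal
state of the connected component of `G(M, Σ(q))` containing `q`. -/
def UMS {α σ : Type*} (M : NFA α σ) : Prop :=
  ∀ q, MaximalInComp M (slAlph M q) q q ∧ ∀ p, MaximalInComp M (slAlph M q) q p → p = q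

/-!
In the counter machine `Wkn.Run`, a letter `m` can be read only when counters `1, …, m - 1` are
zero and counter `m` is not, and reading it sets counters `1, …, m` to `x m - 1`. At most one
letter is ever readable, and `W k n` drives the counters from `(k, …, k)` to `(0, …, 0)`, so it is
the only word doing so.

The automaton tracks all counters at once: along a run of the machine ending in `x`, the state
`(r, k - x r)` is active for every row `r`. It is accepting as soon as `x r ≠ 0`, and a letter the
machine cannot read sends one of these states to the accepting sink. Conversely, every state
active along the run of `W k n` satisfies the invariant `Wkn.Good`, which excludes acceptance
once all counters are zero.

The structural properties hold for any automaton with a sink and a potential that decreases along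
every transition other than a self-loop, provided no state but the sink is entered by a letter it
loops on (`NFA.DescendsToSink`): every state then either loops on a letter `a` or reaches the sink
under `a ^ N` for all large `N`, which yields confluence and the UMS property.
-/

open Filter

namespace NFA

variable {α σ β : Type*} {M : NFA α σ}

theorem mem_evalFrom_singleton_cons {p q : σ} {a : α} {w : List α} :
    q ∈ M.evalFrom {p} (a :: w) ↔ ∃ p' ∈ M.step p a, q ∈ M.evalFrom {p'} w := by
  rw [evalFrom_cons, stepSet_singleton, mem_evalFrom_iff_exists]

theorem mem_evalFrom_of_sink {z : σ} (hz : ∀ a, z ∈ M.step z a) {S : Set σ} (h : z ∈ S)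
    (w : List α) : z ∈ M.evalFrom S w := by
  induction w generalizing S with
  | nil => exact h
  | cons a w ih => exact ih (mem_stepSet.2 ⟨z, h, hz a⟩)

theorem eq_or_lt_of_mem_evalFrom [Preorder β] {φ : σ → β}
    (hφ : ∀ p a q, q ∈ M.step p a → q = p ∨ φ q < φ p) {p q : σ} {w : List α}
    (h : q ∈ M.evalFrom {p} w) : q = p ∨ φ q < φ p := by
  induction w generalizing p with
  | nil => exact Or.inl h
  | cons a w ih =>
    obtain ⟨p', hp', hq⟩ := mem_evalFrom_singleton_cons.1 h
    rcases hφ p a p' hp' with rfl | hlt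
    · exact ih hq
    · rcases ih hq with rfl | hlt'
      · exact Or.inr hlt
      · exact Or.inr (hlt'.trans hlt)

structure DescendsToSink [Preorder β] (M : NFA α σ) (z : σ) (φ : σ → β) : Prop where
  complete : CompleteNFA M
  selfLoopDet : SelfLoopDet M
  sink : ∀ a, z ∈ M.step z a
  potential : ∀ p a q, q ∈ M.step p a → q = p ∨ φ q < φ p
  entry : ∀ p a q, q ∈ M.step p a → q ∈ M.step q a → q = p ∨ q = z

end NFA

section

variable {α σ β : Type*} {M : NFA α σ}

theorem SelfLoopDet.evalFrom_replicate (hM : SelfLoopDet M) {q : σ} {a : α}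
    (h : q ∈ M.step q a) (N : ℕ) : M.evalFrom {q} (List.replicate N a) = {q} := by
  induction N with
  | zero => rfl
  | succ N ih =>
    rw [List.replicate_succ, NFA.evalFrom_cons, NFA.stepSet_singleton, hM q a h, ih]

theorem PartiallyOrderedNFA.of_potential [Preorder β] {φ : σ → β}
    (hφ : ∀ p a q, q ∈ M.step p a → q = p ∨ φ q < φ p) : PartiallyOrderedNFA M := by
  rintro p q ⟨u, hu⟩ ⟨v, hv⟩
  rcases NFA.eq_or_lt_of_mem_evalFrom hφ hu with rfl | hqp
  · rfl
  rcases NFA.eq_or_lt_of_mem_evalFrom hφ hv with rfl | hpq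
  · rfl
  · exact absurd (hqp.trans hpq) (lt_irrefl _)

end

namespace NFA.DescendsToSink

variable {α σ β : Type*} [Preorder β] {M : NFA α σ} {z : σ} {φ : σ → β}

theorem ums (hD : M.DescendsToSink z φ) (hesc : ∀ q, q ≠ z → ∃ a, q ∉ M.step q a) : UMS M := by
  intro q
  refine ⟨⟨.refl, fun r hr => ?_⟩, fun p hp => ?_⟩
  · induction hr with
    | refl => rfl
    | tail _ hstep ih =>
      subst ih
      obtain ⟨a, ha, hr⟩ := hstep
      rwa [hD.selfLoopDet _ a ha] at hr
  by_cases hq : q = z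
  · subst hq
    by_contra hpz
    obtain ⟨a, ha⟩ := hesc p hpz
    obtain ⟨r, hr⟩ := hD.complete p a
    have hrp : r = p := hp.2 r (.single ⟨a, hD.sink a, hr⟩)
    exact ha (hrp ▸ hr)
  · replace hp := hp.1
    induction hp with
    | refl => rfl
    | tail _ hstep ih =>
      subst ih
      rcases hstep with ⟨a, ha, hr⟩ | ⟨a, ha, hr⟩
      · rwa [hD.selfLoopDet _ a ha] at hr
      · exact ((hD.entry _ a _ hr ha).resolve_right hq).symm

variable [WellFoundedLT β]

theorem mem_step_self_or_eventually_mem_sink (hD : M.DescendsToSink z φ) (q : σ) (a : α) :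
    q ∈ M.step q a ∨ ∀ᶠ N in atTop, z ∈ M.evalFrom {q} (List.replicate N a) := by
  induction q using (InvImage.wf φ wellFounded_lt).induction with
  | _ q ih =>
  by_cases hq : q ∈ M.step q a
  · exact Or.inl hq
  obtain ⟨q', hq'⟩ := hD.complete q a
  have hne : q' ≠ q := by rintro rfl; exact hq hq'
  obtain ⟨N, hN⟩ : ∃ N, z ∈ M.evalFrom {q'} (List.replicate N a) := by
    rcases ih q' ((hD.potential q a q' hq').resolve_left hne) with hloop | hev
    · obtain rfl := (hD.entry q a q' hq' hloop).resolve_left hne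
      exact ⟨0, rfl⟩
    · exact hev.exists
  refine Or.inr (eventually_atTop.2 ⟨N + 1, fun N' hN' => ?_⟩)
  rw [← Nat.add_sub_cancel' hN', List.replicate_add, evalFrom_append, List.replicate_succ]
  exact mem_evalFrom_of_sink hD.sink (mem_evalFrom_singleton_cons.2 ⟨q', hq', hN⟩) _

theorem eventually_mem_sink_of_mem_step (hD : M.DescendsToSink z φ) {q s : σ} {a : α}
    (hs : s ∈ M.step q a) (hne : s ≠ q) :
    ∀ᶠ N in atTop, z ∈ M.evalFrom {s} (List.replicate N a) := by
  rcases hD.mem_step_self_or_eventually_mem_sink s a with hloop | hev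
  · obtain rfl := (hD.entry q a s hs hloop).resolve_left hne
    exact Eventually.of_forall fun N => mem_evalFrom_of_sink hD.sink (Set.mem_singleton _) _
  · exact hev

theorem exists_join_of_mem_step_self (hD : M.DescendsToSink z φ) {q t : σ} {a b : α}
    (hqa : q ∈ M.step q a) (ht : t ∈ M.step q b) :
    ∃ w : List α, (∀ c ∈ w, c = a ∨ c = b) ∧ (M.evalFrom {q} w ∩ M.evalFrom {t} w).Nonempty := by
  by_cases hqb : q ∈ M.step q b
  · rw [hD.selfLoopDet q b hqb] at ht
    exact ⟨[], by simp, q, rfl, ht.symm⟩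
  have hq := (hD.mem_step_self_or_eventually_mem_sink q b).resolve_left hqb
  have ht := hD.eventually_mem_sink_of_mem_step ht (by rintro rfl; exact hqb ht)
  obtain ⟨N, hqN, htN⟩ := (hq.and ht).exists
  exact ⟨List.replicate N b, fun c hc => Or.inr (List.eq_of_mem_replicate hc), z, hqN, htN⟩

theorem confluent (hD : M.DescendsToSink z φ) : ConfluentNFA M := by
  intro q a b s hs t ht
  by_cases hqa : q ∈ M.step q a
  · rw [hD.selfLoopDet q a hqa] at hs
    rw [hs]
    exact hD.exists_join_of_mem_step_self hqa ht
  by_cases hqb : q ∈ M.step q b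
  · rw [hD.selfLoopDet q b hqb] at ht
    rw [ht]
    obtain ⟨w, hw, hne⟩ := hD.exists_join_of_mem_step_self hqb hs
    exact ⟨w, fun c hc => (hw c hc).symm, Set.inter_comm _ _ ▸ hne⟩
  have hs' := hD.eventually_mem_sink_of_mem_step hs (by rintro rfl; exact hqa hs)
  have ht' : ∀ᶠ N in atTop,
      z ∈ M.evalFrom {t} (List.replicate N a ++ List.replicate N b) := by
    rcases hD.mem_step_self_or_eventually_mem_sink t a with hta | hta
    · filter_upwards [hD.eventually_mem_sink_of_mem_step ht (by rintro rfl; exact hqb ht)]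
        with N hN
      rwa [evalFrom_append, hD.selfLoopDet.evalFrom_replicate hta]
    · filter_upwards [hta] with N hN
      rw [evalFrom_append]
      exact mem_evalFrom_of_sink hD.sink hN _
  obtain ⟨N, hsN, htN⟩ := (hs'.and ht').exists
  refine ⟨List.replicate N a ++ List.replicate N b, fun c hc => ?_, z, ?_, htN⟩
  · rcases List.mem_append.1 hc with hc | hc
    exacts [Or.inl (List.eq_of_mem_replicate hc), Or.inr (List.eq_of_mem_replicate hc)]
  · rw [evalFrom_append]
    exact mem_evalFrom_of_sink hD.sink hsN _

end NFA.DescendsToSink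

namespace Wkn

section CounterMachine

def read (x : ℕ → ℕ) (m : ℕ) : ℕ → ℕ := fun j => if 1 ≤ j ∧ j ≤ m then x m - 1 else x j

def Enabled (n : ℕ) (x : ℕ → ℕ) (m : ℕ) : Prop :=
  1 ≤ m ∧ m ≤ n ∧ (∀ j, 1 ≤ j → j < m → x j = 0) ∧ 1 ≤ x m

inductive Run (n : ℕ) : (ℕ → ℕ) → List ℕ → (ℕ → ℕ) → Prop
  | nil (x) : Run n x [] x
  | cons {x m w y} : Enabled n x m → Run n (read x m) w y → Run n x (m :: w) y

def IsZero (n : ℕ) (x : ℕ → ℕ) : Prop := ∀ l, 1 ≤ l → l ≤ n → x l = 0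

def zeroUpTo (i : ℕ) (x : ℕ → ℕ) : ℕ → ℕ := fun l => if 1 ≤ l ∧ l ≤ i then 0 else x l

variable {n : ℕ}

theorem Run.append {x y z : ℕ → ℕ} {u v : List ℕ} (h₁ : Run n x u y) (h₂ : Run n y v z) :
    Run n x (u ++ v) z := by
  induction h₁ with
  | nil => exact h₂
  | cons hm _ ih => exact .cons hm (ih h₂)

theorem zeroUpTo_eq_self {i : ℕ} {x : ℕ → ℕ} (hx : ∀ l, 1 ≤ l → l ≤ i → x l = 0) :
    zeroUpTo i x = x :=
  funext fun l => by
    unfold zeroUpTo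
    split_ifs with h
    exacts [(hx l h.1 h.2).symm, rfl]

theorem run_W (j : ℕ) : ∀ {i : ℕ} {x : ℕ → ℕ}, i ≤ n → (∀ l, 1 ≤ l → l ≤ i → x l = j) →
    Run n x (W j i) (zeroUpTo i x) := by
  induction j with
  | zero =>
    intro i x _ hx
    rw [W, zeroUpTo_eq_self hx]
    exact .nil x
  | succ j ihj =>
    intro i
    induction i with
    | zero =>
      intro x _ _
      rw [W, zeroUpTo_eq_self (by omega)]
      exact .nil x
    | succ i ihi =>
      intro x hi hx
      have hxi : x (i + 1) = j + 1 := hx _ (by omega) le_rfl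
      have hen : Enabled n (zeroUpTo i x) (i + 1) :=
        ⟨by omega, hi, fun l hl hli => if_pos ⟨hl, by omega⟩, by simp [zeroUpTo, hxi]⟩
      have hread : ∀ l, 1 ≤ l → l ≤ i + 1 → read (zeroUpTo i x) (i + 1) l = j := by
        intro l hl hli
        simp [read, zeroUpTo, hl, hli, hxi]
      have hend : zeroUpTo (i + 1) (read (zeroUpTo i x) (i + 1)) = zeroUpTo (i + 1) x := by
        funext l
        simp only [zeroUpTo, read]
        split_ifs <;> omega
      rw [W, ← hend]
      exact (ihi (by omega) fun l hl hli => hx l hl (by omega)).append (.cons hen (ihj hi hread))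

theorem Enabled.unique {x : ℕ → ℕ} {m m' : ℕ} (h : Enabled n x m) (h' : Enabled n x m') :
    m = m' := by
  obtain ⟨hm, -, hzero, hpos⟩ := h
  obtain ⟨hm', -, hzero', hpos'⟩ := h'
  by_contra hne
  rcases Nat.lt_or_gt_of_ne hne with hlt | hlt
  · have := hzero' m hm hlt
    omega
  · have := hzero m' hm' hlt
    omega

theorem IsZero.not_enabled {x : ℕ → ℕ} {m : ℕ} (hx : IsZero n x) : ¬ Enabled n x m :=
  fun ⟨hm, hmn, _, hpos⟩ => by
    have := hx m hm hmn
    omega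

theorem Run.unique {x y y' : ℕ → ℕ} {w w' : List ℕ} (h : Run n x w y) (hy : IsZero n y)
    (h' : Run n x w' y') (hy' : IsZero n y') : w = w' := by
  induction h generalizing w' with
  | nil =>
    cases h' with
    | nil => rfl
    | cons hm _ => exact absurd hm hy.not_enabled
  | cons hm _ ih =>
    cases h' with
    | nil => exact absurd hm hy'.not_enabled
    | cons hm' h' =>
      obtain rfl := hm.unique hm'
      rw [ih hy h']

theorem exists_run_isZero_iff {k : ℕ} {w : List ℕ} :
    (∃ y, Run n (fun _ => k) w y ∧ IsZero n y) ↔ w = W k n := by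
  have hW : Run n (fun _ => k) (W k n) (zeroUpTo n fun _ => k) :=
    run_W k le_rfl fun _ _ _ => rfl
  have hzero : IsZero n (zeroUpTo n fun _ => k) := fun l hl hln => if_pos ⟨hl, hln⟩
  constructor
  · rintro ⟨y, hrun, hy⟩
    exact hrun.unique hy hW hzero
  · rintro rfl
    exact ⟨_, hW, hzero⟩

theorem length_W (j i : ℕ) : (W j i).length = (j + i).choose i - 1 := by
  induction j generalizing i with
  | zero => simp [W]
  | succ j ihj =>
    induction i with
    | zero => simp [W]
    | succ i ihi =>
      rw [W, List.length_append, List.length_cons, ihi, ihj,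
        show j + 1 + (i + 1) = j + 1 + i + 1 by ring, Nat.choose_succ_succ',
        show j + (i + 1) = j + 1 + i by ring]
      have := Nat.choose_pos (show i ≤ j + 1 + i by omega)
      have := Nat.choose_pos (show i + 1 ≤ j + 1 + i by omega)
      omega

end CounterMachine

section Automaton

-- `none` is the accepting sink and `some (r, c)` the state in row `r ∈ [1, n]`, column
-- `c ∈ [0, 2k]`. The states of row `n` beyond column `k` are unreachable; they only pad the
-- automaton to `n (2k + 1) + 1` states.
inductive Step (k n : ℕ) : Option (ℕ × ℕ) → ℕ → Option (ℕ × ℕ) → Prop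
  | sink (m) : Step k n none m none
  | lowLoop {r c m} : c ≤ k → m < r → Step k n (some (r, c)) m (some (r, c))
  | spawn {r c l} : c < k → 1 ≤ l → l ≤ r → Step k n (some (r, c)) r (some (l, c + 1))
  | lowFull {r} : Step k n (some (r, k)) r none
  | lowSkip {r c m} : c < k → r < m → Step k n (some (r, c)) m none
  | enter {r m} : r < m → Step k n (some (r, k)) m (some (m - 1, k + 1))
  | topLoop {c m} : k < c → m < n → Step k n (some (n, c)) m (some (n, c))
  | topKill {c} : k < c → Step k n (some (n, c)) n none
  | highLoop {r c m} : k < c → r < n → m ≤ r → Step k n (some (r, c)) m (some (r, c))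
  | climb {r c} : k < c → c < 2 * k → r < n → Step k n (some (r, c)) (r + 1) (some (r, c + 1))
  | highFull {r c} : k < c → c = 2 * k → r < n → Step k n (some (r, c)) (r + 1) none
  | handoff {r c m} : k < c → r < n → r + 1 < m → Step k n (some (r, c)) m (some (m - 1, k + 1))

def Valid (k n : ℕ) : Option (ℕ × ℕ) → Prop
  | none => True
  | some (r, c) => 1 ≤ r ∧ r ≤ n ∧ c ≤ 2 * k

def Loops (k n : ℕ) : Option (ℕ × ℕ) → ℕ → Prop
  | none, _ => True
  | some (r, c), m => m < r ∨ (k < c ∧ m = r ∧ r < n)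

def potential (k n : ℕ) : Option (ℕ × ℕ) → ℕ ×ₗ ℕ
  | none => toLex (0, 0)
  | some (r, c) => if c ≤ k then toLex (n + 2, k - c) else toLex (n + 1 - r, 2 * k - c)

variable {k n m : ℕ} {p q q' : Option (ℕ × ℕ)}

theorem Step.valid (hk : 1 ≤ k) (hm : m ≤ n) (hq : Valid k n q) (h : Step k n q m q') :
    Valid k n q' := by
  cases h <;> simp only [Valid] at hq ⊢ <;> omega

theorem Step.exists (hq : Valid k n q) (hm : m ≤ n) : ∃ q', Step k n q m q' := by
  rcases q with _ | ⟨r, c⟩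
  · exact ⟨none, .sink m⟩
  obtain ⟨hr, hrn, hc⟩ := hq
  rcases lt_trichotomy m r with hmr | rfl | hmr
  · by_cases hck : c ≤ k
    · exact ⟨_, .lowLoop hck hmr⟩
    rcases hrn.lt_or_eq with hrn | rfl
    · exact ⟨_, .highLoop (by omega) hrn hmr.le⟩
    · exact ⟨_, .topLoop (by omega) hmr⟩
  · rcases lt_trichotomy c k with hck | rfl | hck
    · exact ⟨_, .spawn hck hr le_rfl⟩
    · exact ⟨_, .lowFull⟩
    rcases hrn.lt_or_eq with hrn | rfl
    · exact ⟨_, .highLoop hck hrn le_rfl⟩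
    · exact ⟨_, .topKill hck⟩
  · rcases lt_trichotomy c k with hck | rfl | hck
    · exact ⟨_, .lowSkip hck hmr⟩
    · exact ⟨_, .enter hmr⟩
    rcases (show m = r + 1 ∨ r + 1 < m by omega) with rfl | hrm
    · rcases (show c < 2 * k ∨ c = 2 * k by omega) with hc2 | hc2
      · exact ⟨_, .climb hck hc2 (by omega)⟩
      · exact ⟨_, .highFull hck hc2 (by omega)⟩
    · exact ⟨_, .handoff hck (by omega) hrm⟩

theorem Step.eq_or_potential_lt (h : Step k n q m q') :
    q' = q ∨ potential k n q' < potential k n q := by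
  cases h <;> simp only [potential, Option.some.injEq, Prod.mk.injEq, reduceCtorEq, true_or,
    false_or] <;> split_ifs <;> simp only [Prod.Lex.toLex_lt_toLex, true_and] <;> omega

theorem Step.loops_of_eq (h : Step k n q m q') (he : q' = q) : Loops k n q m := by
  cases h <;> simp_all [Loops] <;> omega

theorem Step.eq_of_loops (hl : Loops k n q m) (h : Step k n q m q') : q' = q := by
  cases h <;> simp_all [Loops] <;> omega

theorem Step.eq_or_eq_none_of_loops (h : Step k n p m q) (hl : Loops k n q m) :
    q = p ∨ q = none := by
  cases h <;> simp_all [Loops] <;> omega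

theorem not_loops_min {r c : ℕ} (hr : r ≤ n) : ¬ Loops k n (some (r, c)) (min (r + 1) n) := by
  simp only [Loops]
  omega

abbrev Letter (n : ℕ) := {a : ℕ // 1 ≤ a ∧ a ≤ n}

abbrev State (k n : ℕ) := {q : Option (ℕ × ℕ) // Valid k n q}

def Accepting (k : ℕ) : Option (ℕ × ℕ) → Prop
  | none => True
  | some (_, c) => c < k

def nfa (k n : ℕ) : NFA (Letter n) (State k n) where
  step q a := {q' | Step k n q.1 a.1 q'.1}
  start := {q | ∃ r, q.1 = some (r, 0)}
  accept := {q | Accepting k q.1}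

def sink : State k n := ⟨none, trivial⟩

def stateEquiv (k n : ℕ) : State k n ≃ Option (Fin n × Fin (2 * k + 1)) where
  toFun
    | ⟨none, _⟩ => none
    | ⟨some (r, c), h⟩ =>
      some (⟨r - 1, by obtain ⟨_, _, _⟩ := h; omega⟩, ⟨c, by obtain ⟨_, _, _⟩ := h; omega⟩)
  invFun
    | none => sink
    | some (i, j) => ⟨some (i + 1, j), by omega, i.2, by omega⟩
  left_inv := by
    rintro ⟨_ | ⟨r, c⟩, h⟩
    · rfl
    · refine Subtype.ext (congrArg some (Prod.ext ?_ rfl))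
      have := h.1
      simp only
      omega
  right_inv := by
    rintro (_ | ⟨i, j⟩)
    · rfl
    · simp

instance : Fintype (State k n) := Fintype.ofEquiv _ (stateEquiv k n).symm

theorem card_state (k n : ℕ) : Fintype.card (State k n) = n * (2 * k + 1) + 1 := by
  simp [Fintype.card_congr (stateEquiv k n)]

variable {k n : ℕ}

theorem mem_step {q q' : State k n} {a : Letter n} :
    q' ∈ (nfa k n).step q a ↔ Step k n q.1 a.1 q'.1 := Iff.rfl

theorem sink_mem_step (a : Letter n) : sink ∈ (nfa k n).step sink a := .sink a.1

theorem completeNFA (hk : 1 ≤ k) : CompleteNFA (nfa k n) := fun q a =>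
  have ⟨q', h⟩ := Step.exists q.2 a.2.2
  ⟨⟨q', h.valid hk a.2.2 q.2⟩, h⟩

theorem selfLoopDet : SelfLoopDet (nfa k n) := by
  intro q a hq
  ext q'
  rw [mem_step, Set.mem_singleton_iff, ← Subtype.val_inj]
  exact ⟨Step.eq_of_loops (Step.loops_of_eq hq rfl), fun h => by rw [h]; exact hq⟩

theorem eq_or_eq_sink_of_mem_step {p q : State k n} {a : Letter n} (h : q ∈ (nfa k n).step p a)
    (hq : q ∈ (nfa k n).step q a) : q = p ∨ q = sink := by
  simpa only [← Subtype.val_inj, sink] using h.eq_or_eq_none_of_loops (Step.loops_of_eq hq rfl)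

theorem eq_or_potential_lt {p q : State k n} {a : Letter n} (h : q ∈ (nfa k n).step p a) :
    q = p ∨ potential k n q.1 < potential k n p.1 := by
  simpa only [← Subtype.val_inj] using Step.eq_or_potential_lt h

theorem descendsToSink (hk : 1 ≤ k) :
    (nfa k n).DescendsToSink sink (potential k n ∘ Subtype.val) where
  complete := completeNFA hk
  selfLoopDet := selfLoopDet
  sink := sink_mem_step
  potential _ _ _ := eq_or_potential_lt
  entry _ _ _ := eq_or_eq_sink_of_mem_step

theorem exists_not_mem_step_self {q : State k n} (hq : q ≠ sink) :
    ∃ a, q ∉ (nfa k n).step q a := by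
  obtain ⟨_ | ⟨r, c⟩, hv⟩ := q
  · exact absurd rfl hq
  obtain ⟨hr, hrn, -⟩ := hv
  exact ⟨⟨min (r + 1) n, by omega, by omega⟩, fun h => not_loops_min hrn (Step.loops_of_eq h rfl)⟩

end Automaton

section Language

-- An active state `(r, c)` with `c ≤ k` has seen counter `r` drop by `c`; one beyond column `k`
-- has seen counter `r + 1` drop by at most `c - k`.
def Good (k n : ℕ) (x : ℕ → ℕ) : Option (ℕ × ℕ) → Prop
  | none => False
  | some (r, c) => (c ≤ k ∧ c + x r = k) ∨ (k < c ∧ r < n ∧ c + x (r + 1) ≤ 2 * k)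

def Covers (k n : ℕ) (x : ℕ → ℕ) (S : Set (State k n)) : Prop :=
  ∀ r, 1 ≤ r → r ≤ n → ∃ q ∈ S, q.1 = some (r, k - x r)

variable {k n m : ℕ} {x : ℕ → ℕ}

theorem read_le (hx : ∀ l, x l ≤ k) (m l : ℕ) : read x m l ≤ k := by
  unfold read
  split_ifs
  exacts [(Nat.sub_le _ _).trans (hx m), hx l]

theorem Step.good {q q' : Option (ℕ × ℕ)} (hx : ∀ l, x l ≤ k) (hen : Enabled n x m)
    (hq : Valid k n q) (hg : Good k n x q) (h : Step k n q m q') : Good k n (read x m) q' := by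
  obtain ⟨hm, hmn, hzero, hpos⟩ := hen
  have hxm := hx m
  cases h
  case lowSkip r c hc hrm =>
    have := hzero r hq.1 hrm
    simp only [Good] at hg
    omega
  all_goals simp only [Good, read] at hg ⊢ <;> first | omega | (split_ifs <;> omega)

theorem good_of_run {w : List (Letter n)} {y : ℕ → ℕ} {S : Set (State k n)}
    (hrun : Run n x (w.map Subtype.val) y) (hx : ∀ l, x l ≤ k) (hS : ∀ q ∈ S, Good k n x q.1) :
    ∀ q ∈ (nfa k n).evalFrom S w, Good k n y q.1 := by
  induction w generalizing x S with
  | nil =>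
    cases hrun
    exact hS
  | cons a w ih =>
    rw [List.map_cons] at hrun
    obtain _ | ⟨hen, hrun⟩ := hrun
    refine ih hrun (read_le hx a.1) fun q' hq' => ?_
    obtain ⟨q, hqS, hstep⟩ := NFA.mem_stepSet.1 hq'
    exact Step.good hx hen q.2 (hS q hqS) hstep

theorem not_accepting_of_good {y : ℕ → ℕ} {q : Option (ℕ × ℕ)} (hy : IsZero n y)
    (hq : Valid k n q) (hg : Good k n y q) : ¬ Accepting k q := by
  rcases q with _ | ⟨r, c⟩
  · exact hg.elim
  · have := hy r hq.1 hq.2.1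
    simp only [Good, Accepting] at hg ⊢
    omega

theorem covers_stepSet {S : Set (State k n)} {a : Letter n} (hx : ∀ l, x l ≤ k)
    (hen : Enabled n x a.1) (hS : Covers k n x S) :
    Covers k n (read x a.1) ((nfa k n).stepSet S a) := by
  obtain ⟨hm, hmn, -, hpos⟩ := hen
  have hxm := hx a.1
  intro r hr hrn
  rcases lt_or_ge a.1 r with hmr | hrm
  · obtain ⟨q, hqS, hq⟩ := hS r hr hrn
    refine ⟨q, NFA.mem_stepSet.2 ⟨q, hqS, ?_⟩, by rw [hq, read, if_neg (by omega)]⟩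
    rw [mem_step, hq]
    exact .lowLoop (by omega) hmr
  · obtain ⟨q, hqS, hq⟩ := hS a.1 hm hmn
    refine ⟨⟨some (r, k - x a.1 + 1), hr, hrn, by omega⟩, NFA.mem_stepSet.2 ⟨q, hqS, ?_⟩, ?_⟩
    · rw [mem_step, hq]
      exact .spawn (by omega) hr hrm
    · simp only [read, hr, hrm, and_self, if_true]
      congr 2
      omega

theorem sink_mem_stepSet {S : Set (State k n)} {a : Letter n} (hx : ∀ l, x l ≤ k)
    (hen : ¬ Enabled n x a.1) (hS : Covers k n x S) : sink ∈ (nfa k n).stepSet S a := by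
  obtain ⟨hm, hmn⟩ := a.2
  by_cases hxm : x a.1 = 0
  · obtain ⟨q, hqS, hq⟩ := hS a.1 hm hmn
    refine NFA.mem_stepSet.2 ⟨q, hqS, ?_⟩
    rw [mem_step, hq, hxm, Nat.sub_zero]
    exact .lowFull
  · obtain ⟨j, hj, hjm, hxj⟩ : ∃ j, 1 ≤ j ∧ j < a.1 ∧ x j ≠ 0 := by
      by_contra! h
      exact hen ⟨hm, hmn, h, by omega⟩
    obtain ⟨q, hqS, hq⟩ := hS j hj (by omega)
    refine NFA.mem_stepSet.2 ⟨q, hqS, ?_⟩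
    rw [mem_step, hq]
    exact .lowSkip (by have := hx j; omega) hjm

theorem exists_accept_of_not_run {w : List (Letter n)} {S : Set (State k n)}
    (hx : ∀ l, x l ≤ k) (hS : Covers k n x S)
    (hw : ¬ ∃ y, Run n x (w.map Subtype.val) y ∧ IsZero n y) :
    ∃ q ∈ (nfa k n).accept, q ∈ (nfa k n).evalFrom S w := by
  induction w generalizing x S with
  | nil =>
    obtain ⟨l, hl, hln, hxl⟩ : ∃ l, 1 ≤ l ∧ l ≤ n ∧ x l ≠ 0 := by
      by_contra! h
      exact hw ⟨x, .nil x, h⟩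
    obtain ⟨q, hqS, hq⟩ := hS l hl hln
    refine ⟨q, ?_, hqS⟩
    show Accepting k q.1
    rw [hq]
    show k - x l < k
    have := hx l
    omega
  | cons a w ih =>
    by_cases hen : Enabled n x a.1
    · exact ih (read_le hx a.1) (covers_stepSet hx hen hS)
        fun ⟨y, hrun, hy⟩ => hw ⟨y, .cons hen hrun, hy⟩
    · exact ⟨sink, trivial, NFA.mem_evalFrom_of_sink sink_mem_step (sink_mem_stepSet hx hen hS) w⟩

theorem mem_accepts_iff (w : List (Letter n)) :
    w ∈ (nfa k n).accepts ↔ w.map Subtype.val ≠ W k n := by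
  rw [Ne, ← exists_run_isZero_iff]
  constructor
  · rintro ⟨q, hacc, hq⟩ ⟨y, hrun, hy⟩
    have hstart : ∀ q ∈ (nfa k n).start, Good k n (fun _ => k) q.1 := by
      rintro q ⟨r, hr⟩
      rw [hr]
      exact .inl ⟨Nat.zero_le k, Nat.zero_add k⟩
    exact not_accepting_of_good hy q.2 (good_of_run hrun (fun _ => le_rfl) hstart q hq) hacc
  · refine exists_accept_of_not_run (fun _ => le_rfl) fun r hr hrn => ?_
    exact ⟨⟨some (r, 0), hr, hrn, Nat.zero_le _⟩, ⟨r, rfl⟩, by rw [Nat.sub_self]⟩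

end Language

end Wkn

theorem stmt_12_general (k n : ℕ) (hk : 1 ≤ k) :
    ∃ (σ : Type) (_ : Fintype σ) (M : NFA {a : ℕ // 1 ≤ a ∧ a ≤ n} σ),
      Fintype.card σ = n * (2 * k + 1) + 1 ∧
      PartiallyOrderedNFA M ∧ CompleteNFA M ∧ SelfLoopDet M ∧
      ConfluentNFA M ∧ UMS M ∧
      (∀ w, w ∈ M.accepts ↔ w.map Subtype.val ≠ W k n) ∧
      (W k n).length = (k + n).choose n - 1 := by
  have hD := Wkn.descendsToSink (n := n) hk
  exact ⟨Wkn.State k n, inferInstance, Wkn.nfa k n, Wkn.card_state k n,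
    .of_potential hD.potential, hD.complete, hD.selfLoopDet, hD.confluent,
    hD.ums fun _ => Wkn.exists_not_mem_step_self, Wkn.mem_accepts_iff, Wkn.length_W k n⟩

/-- For all `k, n ≥ 1` there is a ptNFA (complete, partially ordered, self-loop
deterministic and confluent, with the UMS property) over the `n`-letter alphabet
`{a_1,...,a_n}` with exactly `n(2k+1)+1` states accepting every word except the
single word `W_{k,n}`, which has length `binom(k+n,n) - 1`. -/
theorem stmt_12 (k n : ℕ) (hk : 1 ≤ k) (hn : 1 ≤ n) :
    ∃ (σ : Type) (_ : Fintype σ) (M : NFA {a : ℕ // 1 ≤ a ∧ a ≤ n} σ),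
      Fintype.card σ = n * (2 * k + 1) + 1 ∧
      PartiallyOrderedNFA M ∧ CompleteNFA M ∧ SelfLoopDet M ∧
      ConfluentNFA M ∧ UMS M ∧
      (∀ w, w ∈ M.accepts ↔ w.map Subtype.val ≠ W k n) ∧
      (W k n).length = (k + n).choose n - 1 :=
  stmt_12_general k n hk
end

section
/- For every n ≥ 1 and m ≥ 1, there exists an NFA with O(m·n) states over an n-letter alphabet whose complement language is a single word of length binomial(m+n,n) - 1; in particular, taking m = n, there is an NFA with O(n^2) states whose shortest (and only) non-accepted word has length at least 2^n - 1. -/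
/-!
Reading a letter `a` increments digit `a` of a counter and resets all digits below `a`. The word
`W k n` drives this counter through the digit vectors of length `n` with sum at most `k` in
lexicographic order (top digit most significant), which is why it has `C(k + n, n) - 1` letters.
It is the only word over `0, …, n - 1` in which the top letter occurs `k` times, each lower
digit `i` is `0` at the end and whenever a letter above `i + 1` is read, and a letter `i + 1` read
while digit `i` equals `d` is followed by exactly `d - 1` more letters `i + 1` before the next
letter above `i + 1`: cutting a word at its first top letter splits these conditions into the
same conditions for the two factors of `W (k + 1) (n + 1) = W (k + 1) n ++ n :: W k (n + 1)`.

The automaton checks each condition with one widget of `2k + 1` states: states `0, …, k` follow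
digit `i`, and at a letter `i + 1` the widget may branch off into a countdown over the letters
`i + 1` remaining in the block. Every violation leads to the accepting sink or ends in an accepting
state, while on `W k n` all runs stay in rejecting states.
-/

theorem List.append_cons_eq_append_cons_iff {α : Type*} {u s A B : List α} {x c : α} :
    u ++ x :: s = A ++ c :: B ↔
      (∃ r, A = u ++ x :: r ∧ s = r ++ c :: B) ∨ (u = A ∧ x = c ∧ s = B) ∨
        ∃ r, u = A ++ c :: r ∧ B = r ++ x :: s := by
  rw [List.append_eq_append_iff]
  constructor
  · rintro (⟨_ | ⟨y, r⟩, rfl, h⟩ | ⟨_ | ⟨y, r⟩, rfl, h⟩) <;> simp_all [eq_comm]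
  · rintro (⟨r, rfl, rfl⟩ | ⟨rfl, rfl, rfl⟩ | ⟨r, rfl, rfl⟩)
    · exact .inl ⟨x :: r, by simp⟩
    · exact .inl ⟨[], by simp⟩
    · exact .inr ⟨c :: r, by simp⟩

theorem List.exists_of_map_eq_append_cons {α β : Type*} {f : α → β} {l : List α}
    {u s : List β} {b : β} (h : l.map f = u ++ b :: s) :
    ∃ u' a s', l = u' ++ a :: s' ∧ u'.map f = u ∧ f a = b ∧ s'.map f = s := by
  obtain ⟨u', l', rfl, rfl, hl⟩ := List.map_eq_append_iff.mp h
  obtain ⟨a, s', rfl, rfl, rfl⟩ := List.map_eq_cons_iff.mp hl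
  exact ⟨u', a, s', rfl, rfl, rfl, rfl⟩

theorem NFA.mem_eval_append_singleton {α σ : Type*} {M : NFA α σ} {q : σ} {u : List α}
    {a : α} :
    q ∈ M.eval (u ++ [a]) ↔ ∃ p ∈ M.eval u, q ∈ M.step p a := by
  rw [NFA.eval_append_singleton, NFA.mem_stepSet]

theorem NFA.append_mem_accepts_of_mem_eval {α σ : Type*} {M : NFA α σ} {q : σ}
    (hq : q ∈ M.accept) (hloop : ∀ a, q ∈ M.step q a) {u : List α} (hu : q ∈ M.eval u)
    (v : List α) : u ++ v ∈ M.accepts := by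
  refine ⟨q, hq, ?_⟩
  induction v using List.reverseRecOn with
  | nil => simpa using hu
  | append_singleton v a ih =>
    rw [← List.append_assoc]
    exact NFA.mem_eval_append_singleton.mpr ⟨q, ih, hloop a⟩

namespace CounterNFA

def tick (i d a : ℕ) : ℕ := if i < a then 0 else if a = i then d + 1 else d

/-- `digit i u` counts the letters `i` after the last letter above `i` in `u`, and `leadCount i s`
those before the first letter above `i` in `s`. -/
def digit (i : ℕ) (u : List ℕ) : ℕ := u.foldl (tick i) 0

def leadCount (i : ℕ) (s : List ℕ) : ℕ := s.foldr (fun a d => tick i d a) 0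

@[simp] lemma digit_nil (i : ℕ) : digit i [] = 0 := rfl

lemma digit_append_singleton (i a : ℕ) (u : List ℕ) :
    digit i (u ++ [a]) = tick i (digit i u) a := by
  simp [digit]

lemma digit_append_cons_of_lt {i c : ℕ} (h : i < c) (u s : List ℕ) :
    digit i (u ++ c :: s) = digit i s := by
  simp [digit, tick, h]

lemma digit_eq_count {i : ℕ} {u : List ℕ} (h : ∀ x ∈ u, x ≤ i) :
    digit i u = u.count i := by
  induction u using List.reverseRecOn with
  | nil => rfl
  | append_singleton u a ih =>
    simp only [List.mem_append, List.mem_singleton] at h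
    rw [digit_append_singleton, ih fun x hx => h x (.inl hx), List.count_append, tick,
      if_neg (not_lt.mpr (h a (.inr rfl)))]
    split_ifs with ha <;> simp [ha]

@[simp] lemma leadCount_nil (i : ℕ) : leadCount i [] = 0 := rfl

@[simp] lemma leadCount_cons (i a : ℕ) (s : List ℕ) :
    leadCount i (a :: s) = tick i (leadCount i s) a := rfl

lemma leadCount_append_cons_of_lt {i c : ℕ} (h : i < c) (u s : List ℕ) :
    leadCount i (u ++ c :: s) = leadCount i u := by
  induction u with
  | nil => simp [tick, h]
  | cons a u ih => simp [ih]

lemma leadCount_eq_count {i : ℕ} {s : List ℕ} (h : ∀ x ∈ s, x ≤ i) :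
    leadCount i s = s.count i := by
  induction s with
  | nil => rfl
  | cons a s ih =>
    simp only [List.mem_cons, forall_eq_or_imp] at h
    rw [leadCount_cons, ih h.2, List.count_cons, tick, if_neg (not_lt.mpr h.1)]
    by_cases ha : a = i <;> simp [ha]

def W : ℕ → ℕ → List ℕ
  | _, 0 => []
  | 0, _ + 1 => []
  | k + 1, n + 1 => W (k + 1) n ++ n :: W k (n + 1)
termination_by k n => (k, n)

@[simp] lemma W_zero_right (k : ℕ) : W k 0 = [] := by cases k <;> simp [W]
@[simp] lemma W_zero_left (n : ℕ) : W 0 n = [] := by cases n <;> simp [W]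
lemma W_succ_succ (k n : ℕ) : W (k + 1) (n + 1) = W (k + 1) n ++ n :: W k (n + 1) := by
  rw [W]

lemma W_one (k : ℕ) : W k 1 = List.replicate k 0 := by
  induction k with
  | zero => simp
  | succ k ih => simp [W_succ_succ, ih, List.replicate_succ]

lemma length_W (k n : ℕ) : (W k n).length + 1 = (k + n).choose n := by
  induction k, n using W.induct with
  | case1 k => simp
  | case2 n => simp
  | case3 k n ih₁ ih₂ =>
    rw [W_succ_succ, show k + 1 + (n + 1) = k + 1 + n + 1 by omega, Nat.choose_succ_succ',
      ← ih₁, show k + 1 + n = k + (n + 1) by omega, ← ih₂]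
    simp only [List.length_append, List.length_cons]
    omega

lemma lt_of_mem_W {k n x : ℕ} (hx : x ∈ W k n) : x < n := by
  induction k, n using W.induct with
  | case1 k => simp at hx
  | case2 n => simp at hx
  | case3 k n ih₁ ih₂ =>
    rw [W_succ_succ] at hx
    simp only [List.mem_append, List.mem_cons] at hx
    rcases hx with hx | rfl | hx
    · exact (ih₁ hx).trans (Nat.lt_succ_self _)
    · exact Nat.lt_succ_self _
    · exact ih₂ hx

/-- `m` is the top letter, not the number of letters. -/
structure IsCounterWord (κ m : ℕ) (v : List ℕ) : Prop where
  le_top : ∀ x ∈ v, x ≤ m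
  count_top : v.count m = κ
  digit_end : ∀ i < m, digit i v = 0
  digit_reset : ∀ u x s, v = u ++ x :: s → ∀ i, i + 1 < x → digit i u = 0
  leadCount_add_one : ∀ u i s, v = u ++ (i + 1) :: s → leadCount (i + 1) s + 1 = digit i u

lemma isCounterWord_zero_iff {m : ℕ} {v : List ℕ} : IsCounterWord 0 m v ↔ v = [] := by
  refine ⟨fun hv => ?_, ?_⟩
  · rcases List.eq_nil_or_concat' v with rfl | ⟨u, x, rfl⟩
    · rfl
    have hxm : x ≠ m := by
      rintro rfl
      simpa using hv.count_top
    have := hv.digit_end x (lt_of_le_of_ne (hv.le_top x (by simp)) hxm)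
    simp [digit_append_singleton, tick] at this
  · rintro rfl
    exact ⟨by simp, by simp, by simp, fun u x s h => by simp at h, fun u i s h => by simp at h⟩

lemma isCounterWord_top_zero_iff {κ : ℕ} {v : List ℕ} :
    IsCounterWord κ 0 v ↔ v = List.replicate κ 0 := by
  refine ⟨fun hv => ?_, ?_⟩
  · have hv0 : ∀ x ∈ v, x = 0 := fun x hx => Nat.le_zero.mp (hv.le_top x hx)
    rw [List.eq_replicate_iff, ← hv.count_top,
      List.count_eq_length.mpr fun x hx => (hv0 x hx).symm]
    exact ⟨rfl, hv0⟩
  · rintro rfl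
    refine ⟨by simp, by simp, by simp, fun u x s h i hi => ?_, fun u i s h => ?_⟩
    · have : x = 0 := List.eq_of_mem_replicate (n := κ) (by simp [h])
      omega
    · have : i + 1 = 0 := List.eq_of_mem_replicate (n := κ) (by simp [h])
      omega

lemma IsCounterWord.exists_append_cons {κ m : ℕ} {v : List ℕ}
    (hv : IsCounterWord (κ + 1) (m + 1) v) :
    ∃ A B, v = A ++ (m + 1) :: B ∧ IsCounterWord (κ + 1) m A ∧
      IsCounterWord κ (m + 1) B := by
  obtain ⟨A, B, hmA, rfl, -⟩ :=
    List.exists_erase_eq (List.count_pos_iff.mp (by rw [hv.count_top]; omega))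
  have hA : ∀ x ∈ A, x ≤ m := fun x hx => by
    have := hv.le_top x (by simp [hx])
    have : x ≠ m + 1 := by rintro rfl; exact hmA hx
    omega
  have hB : ∀ x ∈ B, x ≤ m + 1 := fun x hx => hv.le_top x (by simp [hx])
  have hcountB : B.count (m + 1) = κ := by
    have := hv.count_top
    simp only [List.count_append, List.count_cons_self, List.count_eq_zero.mpr hmA] at this
    omega
  refine ⟨A, B, rfl, ⟨hA, ?_, ?_, ?_, ?_⟩, ⟨hB, hcountB, ?_, ?_, ?_⟩⟩
  · have := hv.leadCount_add_one A m B rfl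
    rwa [leadCount_eq_count hB, hcountB, digit_eq_count hA, eq_comm] at this
  · exact fun i hi => hv.digit_reset A (m + 1) B rfl i (by omega)
  · intro u x s h i hi
    exact hv.digit_reset u x (s ++ (m + 1) :: B) (by simp [h]) i hi
  · intro u i s h
    have hi : i + 1 < m + 1 := by have := hA (i + 1) (by simp [h]); omega
    rw [← hv.leadCount_add_one u i (s ++ (m + 1) :: B) (by simp [h]),
      leadCount_append_cons_of_lt hi]
  · intro i hi
    rw [← digit_append_cons_of_lt hi A B]
    exact hv.digit_end i hi
  · intro u x s h i hi
    have hx := hB x (by simp [h])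
    rw [← digit_append_cons_of_lt (show i < m + 1 by omega) A]
    exact hv.digit_reset _ x s (by simp [h]) i hi
  · intro u i s h
    have hi := hB (i + 1) (by simp [h])
    rw [← digit_append_cons_of_lt (show i < m + 1 by omega) A]
    exact hv.leadCount_add_one _ i s (by simp [h])

lemma IsCounterWord.append_cons {κ m : ℕ} {A B : List ℕ} (hA : IsCounterWord (κ + 1) m A)
    (hB : IsCounterWord κ (m + 1) B) : IsCounterWord (κ + 1) (m + 1) (A ++ (m + 1) :: B) := by
  have hmA : m + 1 ∉ A := fun h => by have := hA.le_top _ h; omega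
  refine ⟨?_, ?_, ?_, ?_, ?_⟩
  · simp only [List.mem_append, List.mem_cons]
    rintro x (hx | rfl | hx)
    · exact (hA.le_top x hx).trans m.le_succ
    · rfl
    · exact hB.le_top x hx
  · simp [List.count_append, List.count_eq_zero.mpr hmA, hB.count_top]
  · intro i hi
    rw [digit_append_cons_of_lt hi]
    exact hB.digit_end i hi
  · intro u x s h i hi
    rcases List.append_cons_eq_append_cons_iff.mp h.symm with
      ⟨r, hr, -⟩ | ⟨rfl, rfl, -⟩ | ⟨r, rfl, hr⟩
    · exact hA.digit_reset u x r hr i hi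
    · exact hA.digit_end i (by omega)
    · have hx := hB.le_top x (by simp [hr])
      rw [digit_append_cons_of_lt (by omega)]
      exact hB.digit_reset r x s hr i hi
  · intro u i s h
    rcases List.append_cons_eq_append_cons_iff.mp h.symm with
      ⟨r, hr, rfl⟩ | ⟨rfl, hi, rfl⟩ | ⟨r, rfl, hr⟩
    · have hi := hA.le_top (i + 1) (by simp [hr])
      rw [leadCount_append_cons_of_lt (by omega)]
      exact hA.leadCount_add_one u i r hr
    · obtain rfl : i = m := by omega
      rw [leadCount_eq_count hB.le_top, hB.count_top, digit_eq_count hA.le_top, hA.count_top]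
    · have hi := hB.le_top (i + 1) (by simp [hr])
      rw [digit_append_cons_of_lt (by omega)]
      exact hB.leadCount_add_one r i s hr

theorem isCounterWord_iff_eq_W {κ m : ℕ} {v : List ℕ} :
    IsCounterWord κ m v ↔ v = W κ (m + 1) := by
  induction κ generalizing m v with
  | zero => simp [isCounterWord_zero_iff]
  | succ κ ihκ =>
    induction m generalizing v with
    | zero => rw [isCounterWord_top_zero_iff, W_one]
    | succ m ihm =>
      rw [W_succ_succ]
      constructor
      · intro hv
        obtain ⟨A, B, rfl, hA, hB⟩ := hv.exists_append_cons
        rw [ihm.mp hA, ihκ.mp hB]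
      · rintro rfl
        exact (ihm.mpr rfl).append_cons (ihκ.mpr rfl)

lemma digit_lt_of_W_eq {k n x : ℕ} {u s : List ℕ} (h : W k n = u ++ x :: s) :
    digit x u < k := by
  induction k, n using W.induct generalizing u x s with
  | case1 k => simp at h
  | case2 n => simp at h
  | case3 k n ih₁ ih₂ =>
    rw [W_succ_succ] at h
    have hA : ∀ y ∈ W (k + 1) n, y < n := fun y hy => lt_of_mem_W hy
    rcases List.append_cons_eq_append_cons_iff.mp h.symm with
      ⟨r, hr, -⟩ | ⟨rfl, rfl, -⟩ | ⟨r, rfl, hr⟩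
    · exact ih₁ hr
    · rw [digit_eq_count fun y hy => (hA y hy).le,
        List.count_eq_zero.mpr fun hx => (hA _ hx).false]
      omega
    · have hx : x < n + 1 := lt_of_mem_W (k := k) (by simp [hr])
      rcases Nat.lt_succ_iff_lt_or_eq.mp hx with hx | rfl
      · rw [digit_append_cons_of_lt hx]
        exact (ih₂ hr).trans k.lt_succ_self
      · have hr' : ∀ y ∈ r, y ≤ x := fun y hy =>
          Nat.lt_succ_iff.mp (lt_of_mem_W (k := k) (by simp [hr, hy]))
        have := ih₂ hr
        rw [digit_eq_count hr'] at this
        rw [digit_eq_count, List.count_append, List.count_cons_self,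
          List.count_eq_zero.mpr fun hx => (hA _ hx).false]
        · omega
        · simp only [List.mem_append, List.mem_cons]
          rintro y (hy | rfl | hy)
          exacts [(hA y hy).le, le_rfl, hr' y hy]

/-- Widget `i` of the automaton moves from state `t` to state `t'` on letter `a`. A state `t ≤ K`
holds digit `i`; the state `K + r` with `r ≥ 1` expects `r - 1` more letters `i + 1` before the
block of letters `≤ i + 1` ends. `WidgetFails` lists the moves into the accepting sink. -/
def WidgetMove (K i t a t' : ℕ) : Prop :=
  (t ≤ K ∧ a < i ∧ t' = t) ∨ (t < K ∧ a = i ∧ t' = t + 1) ∨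
    (t ≤ K ∧ a = i + 1 ∧ (t' = 0 ∨ 0 < t ∧ t' = K + t)) ∨ (t = 0 ∧ i + 1 < a ∧ t' = 0) ∨
    (K < t ∧ a ≤ i ∧ t' = t) ∨ (K + 1 < t ∧ a = i + 1 ∧ t' + 1 = t)

def WidgetFails (K i t a : ℕ) : Prop :=
  (t = K ∧ a = i) ∨ (t = 0 ∧ a = i + 1) ∨ (0 < t ∧ t ≤ K ∧ i + 1 < a) ∨
    (t = K + 1 ∧ a = i + 1) ∨ (K + 1 < t ∧ i + 1 < a)

lemma widgetMove_tick {K i d a : ℕ} (hd : d ≤ K) (h : ¬WidgetFails K i d a) :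
    WidgetMove K i d a (tick i d a) ∧ tick i d a ≤ K := by
  unfold WidgetFails at h
  unfold WidgetMove tick
  grind

lemma eq_tick_of_widgetMove {K i d a t' : ℕ} (hd : d ≤ K) (h : WidgetMove K i d a t') :
    t' = tick i d a ∧ t' ≤ K ∨ a = i + 1 ∧ t' = K + d := by
  unfold WidgetMove at h
  unfold tick
  grind

lemma not_widgetFails_guess {K i L a : ℕ} : ¬WidgetFails K i (K + 1 + tick (i + 1) L a) a := by
  unfold WidgetFails tick
  grind

lemma eq_guess_of_not_widgetFails {K i t a L : ℕ} (ht : K < t) (h : ¬WidgetFails K i t a)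
    (hnext : ∀ t', t' ≤ t → K < t' → WidgetMove K i t a t' → t' = K + 1 + L) :
    t = K + 1 + tick (i + 1) L a := by
  unfold WidgetFails at h
  unfold tick
  rcases lt_trichotomy a (i + 1) with ha | ha | ha
  · have := hnext t le_rfl ht (by unfold WidgetMove; omega)
    split_ifs <;> omega
  · have := hnext (t - 1) (by omega) (by omega) (by unfold WidgetMove; omega)
    split_ifs <;> omega
  · split_ifs <;> omega

lemma eq_of_widgetMove_guess {K i L a t' : ℕ}
    (h : WidgetMove K i (K + 1 + tick (i + 1) L a) a t') :
    t' = K + 1 + L := by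
  unfold WidgetMove tick at h
  grind

lemma IsCounterWord.not_widgetFails {K m a i : ℕ} {v u s : List ℕ} (hv : IsCounterWord K m v)
    (hlt : ∀ u x s, v = u ++ x :: s → digit x u < K) (h : v = u ++ a :: s)
    (hK : digit i u ≤ K) : ¬WidgetFails K i (digit i u) a := by
  rintro (⟨hd, rfl⟩ | ⟨hd, rfl⟩ | ⟨hd, -, ha⟩ | ⟨hd, -⟩ | ⟨hd, -⟩)
  · exact (hlt u a s h).ne hd
  · have := hv.leadCount_add_one u i s h
    omega
  · have := hv.digit_reset u a s h i ha
    omega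
  all_goals omega

abbrev State (m K : ℕ) := (Fin (m + 1) × Fin (2 * K + 1)) ⊕ Unit

def counterNFA (m K : ℕ) : NFA (Fin (m + 1)) (State m K) where
  step
    | .inl (i, t), a => {q | match q with
        | .inl (i', t') => i' = i ∧ WidgetMove K i t a t'
        | .inr () => WidgetFails K i t a}
    | .inr (), _ => {.inr ()}
  start := {q | match q with
    | .inl (_, t) => (t : ℕ) = 0
    | .inr () => False}
  accept := {q | match q with
    | .inl (i, t) => if (i : ℕ) = m then (t : ℕ) < K else (t : ℕ) ≠ 0 ∧ (t : ℕ) ≠ K + 1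
    | .inr () => True}

section Runs

variable {m K : ℕ}

@[simp] lemma inl_mem_step {i i' a : Fin (m + 1)} {t t' : Fin (2 * K + 1)} :
    .inl (i', t') ∈ (counterNFA m K).step (.inl (i, t)) a ↔ i' = i ∧ WidgetMove K i t a t' :=
  Iff.rfl

@[simp] lemma inr_mem_step {i a : Fin (m + 1)} {t : Fin (2 * K + 1)} :
    .inr () ∈ (counterNFA m K).step (.inl (i, t)) a ↔ WidgetFails K i t a :=
  Iff.rfl

@[simp] lemma inl_mem_accept {i : Fin (m + 1)} {t : Fin (2 * K + 1)} :
    .inl (i, t) ∈ (counterNFA m K).accept ↔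
      if (i : ℕ) = m then (t : ℕ) < K else (t : ℕ) ≠ 0 ∧ (t : ℕ) ≠ K + 1 :=
  Iff.rfl

variable {w : List (Fin (m + 1))}

lemma sink_notMem_eval (hw : w ∉ (counterNFA m K).accepts) {u s : List (Fin (m + 1))}
    (h : u ++ s = w) : .inr () ∉ (counterNFA m K).eval u := fun hq =>
  hw (h ▸ NFA.append_mem_accepts_of_mem_eval (M := counterNFA m K) (q := .inr ()) trivial
    (fun _ => rfl) hq s)

lemma exists_digit_mem_eval (hw : w ∉ (counterNFA m K).accepts) (i : Fin (m + 1))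
    {u s : List (Fin (m + 1))} (h : u ++ s = w) :
    ∃ t : Fin (2 * K + 1), (t : ℕ) = digit i (u.map Fin.val) ∧ (t : ℕ) ≤ K ∧
      .inl (i, t) ∈ (counterNFA m K).eval u := by
  induction u using List.reverseRecOn generalizing s with
  | nil => exact ⟨0, rfl, Nat.zero_le _, rfl⟩
  | append_singleton u a ih =>
    have h' : u ++ a :: s = w := by simpa using h
    obtain ⟨t, ht, htK, hmem⟩ := ih h'
    have hfail : ¬WidgetFails K i t a := fun hf =>
      sink_notMem_eval hw h (NFA.mem_eval_append_singleton.mpr ⟨_, hmem, hf⟩)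
    obtain ⟨hmove, hle⟩ := widgetMove_tick htK hfail
    refine ⟨⟨tick i t a, by omega⟩, ?_, hle,
      NFA.mem_eval_append_singleton.mpr ⟨_, hmem, inl_mem_step.mpr ⟨rfl, hmove⟩⟩⟩
    simp [digit_append_singleton, ht]

lemma eq_leadCount_of_mem_eval (hw : w ∉ (counterNFA m K).accepts) {i : Fin (m + 1)}
    (hi : (i : ℕ) < m) {u s : List (Fin (m + 1))} (h : u ++ s = w) {t : Fin (2 * K + 1)}
    (ht : K < t) (hmem : .inl (i, t) ∈ (counterNFA m K).eval u) :
    (t : ℕ) = K + 1 + leadCount (i + 1) (s.map Fin.val) := by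
  induction s generalizing u t with
  | nil =>
    have hacc : .inl (i, t) ∉ (counterNFA m K).accept := fun hacc =>
      hw ⟨_, hacc, by simpa [← h] using hmem⟩
    rw [inl_mem_accept, if_neg hi.ne] at hacc
    simp only [List.map_nil, leadCount_nil]
    omega
  | cons a s ih =>
    have h' : (u ++ [a]) ++ s = w := by simpa using h
    simp only [List.map_cons, leadCount_cons]
    refine eq_guess_of_not_widgetFails ht (fun hf => sink_notMem_eval hw h'
      (NFA.mem_eval_append_singleton.mpr ⟨_, hmem, hf⟩)) fun t' ht' hKt' hmove => ?_
    exact ih h' (t := ⟨t', by omega⟩) hKt'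
      (NFA.mem_eval_append_singleton.mpr ⟨_, hmem, inl_mem_step.mpr ⟨rfl, hmove⟩⟩)

lemma digit_eq_zero_of_notMem_accepts (hw : w ∉ (counterNFA m K).accepts) {u s : List ℕ}
    {x : ℕ} (h : w.map Fin.val = u ++ x :: s) {i : ℕ} (hi : i + 1 < x) : digit i u = 0 := by
  obtain ⟨u, a, s, rfl, rfl, rfl, rfl⟩ := List.exists_of_map_eq_append_cons h
  obtain ⟨t, ht, htK, hmem⟩ := exists_digit_mem_eval hw ⟨i, by omega⟩ rfl
  dsimp only at ht
  by_contra hne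
  refine sink_notMem_eval hw (u := u ++ [a]) (s := s) (by simp)
    (NFA.mem_eval_append_singleton.mpr ⟨_, hmem, ?_⟩)
  simp only [inr_mem_step, WidgetFails]
  omega

lemma leadCount_add_one_of_notMem_accepts (hw : w ∉ (counterNFA m K).accepts)
    {u s : List ℕ} {i : ℕ} (h : w.map Fin.val = u ++ (i + 1) :: s) :
    leadCount (i + 1) s + 1 = digit i u := by
  obtain ⟨u, a, s, rfl, rfl, ha, rfl⟩ := List.exists_of_map_eq_append_cons h
  obtain ⟨t, ht, htK, hmem⟩ := exists_digit_mem_eval hw ⟨i, by omega⟩ rfl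
  dsimp only at ht
  have h' : (u ++ [a]) ++ s = u ++ a :: s := by simp
  have ht0 : (t : ℕ) ≠ 0 := fun ht0 => sink_notMem_eval hw h'
    (NFA.mem_eval_append_singleton.mpr
      ⟨_, hmem, by simp only [inr_mem_step, WidgetFails]; omega⟩)
  have hguess := eq_leadCount_of_mem_eval hw (i := ⟨i, by omega⟩) (show i < m by omega) h'
    (t := ⟨K + t, by omega⟩) (show K < K + t by omega) (NFA.mem_eval_append_singleton.mpr
      ⟨_, hmem, inl_mem_step.mpr ⟨rfl, by dsimp only; unfold WidgetMove; omega⟩⟩)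
  simp only at hguess
  omega

theorem isCounterWord_of_notMem_accepts (hw : w ∉ (counterNFA m K).accepts) :
    IsCounterWord K m (w.map Fin.val) := by
  have hend (i : Fin (m + 1)) : ∃ t : Fin (2 * K + 1), (t : ℕ) = digit i (w.map Fin.val) ∧
      (t : ℕ) ≤ K ∧ .inl (i, t) ∉ (counterNFA m K).accept := by
    obtain ⟨t, ht, htK, hmem⟩ := exists_digit_mem_eval hw i (List.append_nil w)
    exact ⟨t, ht, htK, fun hacc => hw ⟨_, hacc, hmem⟩⟩
  have hle : ∀ x ∈ w.map Fin.val, x ≤ m := by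
    simp only [List.mem_map]
    rintro _ ⟨a, -, rfl⟩
    exact Nat.lt_succ_iff.mp a.isLt
  refine ⟨hle, ?_, fun i hi => ?_, fun u x s h i hi => digit_eq_zero_of_notMem_accepts hw h hi,
    fun u i s h => leadCount_add_one_of_notMem_accepts hw h⟩
  · obtain ⟨t, ht, htK, hacc⟩ := hend (Fin.last m)
    rw [inl_mem_accept, Fin.val_last, if_pos rfl] at hacc
    rw [Fin.val_last] at ht
    rw [← digit_eq_count hle, ← ht]
    omega
  · obtain ⟨t, ht, htK, hacc⟩ := hend ⟨i, by omega⟩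
    rw [inl_mem_accept, if_neg hi.ne] at hacc
    dsimp only at ht
    omega

lemma mem_eval_of_isCounterWord (hv : IsCounterWord K m (w.map Fin.val))
    (hlt : ∀ u x s, w.map Fin.val = u ++ x :: s → digit x u < K) {u s : List (Fin (m + 1))}
    (h : u ++ s = w) {q : State m K} (hq : q ∈ (counterNFA m K).eval u) :
    ∃ i t, q = .inl (i, t) ∧ ((t : ℕ) = digit i (u.map Fin.val) ∧ (t : ℕ) ≤ K ∨
      (i : ℕ) < m ∧ (t : ℕ) = K + 1 + leadCount (i + 1) (s.map Fin.val)) := by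
  induction u using List.reverseRecOn generalizing s q with
  | nil =>
    rcases q with ⟨i, t⟩ | ⟨⟩
    · have ht : (t : ℕ) = 0 := hq
      exact ⟨i, t, rfl, .inl ⟨ht, by omega⟩⟩
    · exact hq.elim
  | append_singleton u a ih =>
    obtain ⟨p, hp, hpq⟩ := NFA.mem_eval_append_singleton.mp hq
    have hsplit : w.map Fin.val = u.map Fin.val ++ (a : ℕ) :: s.map Fin.val := by simp [← h]
    obtain ⟨i, t, rfl, ⟨ht, htK⟩ | ⟨hi, ht⟩⟩ := ih (s := a :: s) (by simpa using h) hp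
    · rcases q with ⟨i', t'⟩ | ⟨⟩
      · obtain ⟨rfl, hmove⟩ := inl_mem_step.mp hpq
        refine ⟨i', t', rfl, ?_⟩
        rcases eq_tick_of_widgetMove htK hmove with ⟨h₁, h₂⟩ | ⟨ha, h₂⟩
        · exact .inl ⟨by simp [digit_append_singleton, h₁, ht], h₂⟩
        · have := hv.leadCount_add_one _ i' _ (ha ▸ hsplit)
          exact .inr ⟨by omega, by omega⟩
      · rw [inr_mem_step, ht] at hpq
        exact (hv.not_widgetFails hlt hsplit (ht ▸ htK) hpq).elim
    · simp only [List.map_cons, leadCount_cons] at ht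
      rcases q with ⟨i', t'⟩ | ⟨⟩
      · obtain ⟨rfl, hmove⟩ := inl_mem_step.mp hpq
        exact ⟨i', t', rfl, .inr ⟨hi, eq_of_widgetMove_guess (ht ▸ hmove)⟩⟩
      · exact (not_widgetFails_guess (ht ▸ inr_mem_step.mp hpq)).elim

theorem notMem_accepts_of_isCounterWord (hv : IsCounterWord K m (w.map Fin.val))
    (hlt : ∀ u x s, w.map Fin.val = u ++ x :: s → digit x u < K) :
    w ∉ (counterNFA m K).accepts := by
  rintro ⟨q, hacc, hq⟩
  obtain ⟨i, t, rfl, ⟨ht, -⟩ | ⟨hi, ht⟩⟩ :=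
    mem_eval_of_isCounterWord hv hlt (List.append_nil w) hq
  · rw [inl_mem_accept] at hacc
    split_ifs at hacc with him
    · rw [him, digit_eq_count hv.le_top, hv.count_top] at ht
      omega
    · rw [hv.digit_end i (by omega)] at ht
      exact hacc.1 ht
  · rw [inl_mem_accept, if_neg hi.ne] at hacc
    simp only [List.map_nil, leadCount_nil, add_zero] at ht
    exact hacc.2 ht

end Runs

theorem notMem_accepts_counterNFA_iff {m K : ℕ} {w : List (Fin (m + 1))} :
    w ∉ (counterNFA m K).accepts ↔ w.map Fin.val = W K (m + 1) := by
  rw [← isCounterWord_iff_eq_W]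
  refine ⟨isCounterWord_of_notMem_accepts, fun hv => notMem_accepts_of_isCounterWord hv ?_⟩
  rw [isCounterWord_iff_eq_W.mp hv]
  exact fun u x s => digit_lt_of_W_eq

theorem exists_nfa_compl_eq_singleton (n K : ℕ) (hn : 1 ≤ n) :
    ∃ (σ : Type) (_ : Fintype σ) (M : NFA (Fin n) σ) (w0 : List (Fin n)),
      Fintype.card σ = n * (2 * K + 1) + 1 ∧ w0.length = (K + n).choose n - 1 ∧
      ∀ w, w ∈ M.accepts ↔ w ≠ w0 := by
  obtain ⟨m, rfl⟩ := Nat.exists_eq_add_of_le' hn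
  refine ⟨State m K, inferInstance, counterNFA m K,
    (W K (m + 1)).pmap Fin.mk fun _ => lt_of_mem_W, by simp, ?_, fun w => ?_⟩
  · rw [List.length_pmap, ← length_W]
    rfl
  · rw [← not_iff_not, not_not, notMem_accepts_counterNFA_iff,
      ← (List.map_injective_iff.mpr Fin.val_injective).eq_iff, List.map_pmap]
    simp

lemma two_pow_le_centralBinom (n : ℕ) : 2 ^ n ≤ n.centralBinom := by
  induction n with
  | zero => simp
  | succ n ih =>
    have := Nat.succ_mul_centralBinom_succ n
    rw [pow_succ]
    nlinarith

end CounterNFA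

theorem stmt_13_general (n m : ℕ) (hn : 1 ≤ n) :
    (∃ (σ : Type) (_ : Fintype σ) (M : NFA (Fin n) σ) (w0 : List (Fin n)),
        Fintype.card σ = n * (2 * m + 1) + 1 ∧
        w0.length = (m + n).choose n - 1 ∧
        ∀ w, w ∈ M.accepts ↔ w ≠ w0) ∧
    (∃ (σ : Type) (_ : Fintype σ) (M : NFA (Fin n) σ) (w0 : List (Fin n)),
        Fintype.card σ = n * (2 * n + 1) + 1 ∧
        2 ^ n - 1 ≤ w0.length ∧
        ∀ w, w ∈ M.accepts ↔ w ≠ w0) := by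
  refine ⟨CounterNFA.exists_nfa_compl_eq_singleton n m hn, ?_⟩
  obtain ⟨σ, hσ, M, w0, hcard, hlen, hM⟩ := CounterNFA.exists_nfa_compl_eq_singleton n n hn
  refine ⟨σ, hσ, M, w0, hcard, ?_, hM⟩
  have := CounterNFA.two_pow_le_centralBinom n
  rw [Nat.centralBinom_eq_two_mul_choose, two_mul] at this
  omega

/-- For every `n, m ≥ 1` there is an NFA with `n(2m+1)+1` (i.e. `O(m·n)`) states
over an `n`-letter alphabet whose complement language is a single word of length
`binom(m+n,n) - 1`; in particular (taking `m = n`) there is an NFA with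
`O(n^2)` states whose only non-accepted word has length at least `2^n - 1`. -/
theorem stmt_13 (n m : ℕ) (hn : 1 ≤ n) (hm : 1 ≤ m) :
    (∃ (σ : Type) (_ : Fintype σ) (M : NFA (Fin n) σ) (w0 : List (Fin n)),
        Fintype.card σ = n * (2 * m + 1) + 1 ∧
        w0.length = (m + n).choose n - 1 ∧
        ∀ w, w ∈ M.accepts ↔ w ≠ w0) ∧
    (∃ (σ : Type) (_ : Fintype σ) (M : NFA (Fin n) σ) (w0 : List (Fin n)),
        Fintype.card σ = n * (2 * n + 1) + 1 ∧
        2 ^ n - 1 ≤ w0.length ∧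
        ∀ w, w ∈ M.accepts ↔ w ≠ w0) :=
  stmt_13_general n m hn
end

section
/- Let A be an NFA over Σ accepting exactly Σ* \ {w} for a word w = u a v (u, v words, a a letter). Then for every such factorization, there exists a state q of A reachable from an initial state under u such that a is not a self-loop letter of q (i.e., q ∉ q·a) — equivalently, not all states reachable under the proper prefix u have a self-loop under the next letter a. -/
/-!
If every state reached under `u` had an `a`-loop, then reading the extra letter `a` after `u`
could only enlarge the set of reached states, so `u ++ a :: v` would be accepted as soon as
`u ++ v` is. But `u ++ v` is shorter than `w`, hence accepted, while `w = u ++ a :: v` is not.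
-/

namespace NFA

variable {α σ : Type*} (M : NFA α σ)

theorem evalFrom_mono (x : List α) : Monotone (M.evalFrom · x) := by
  intro S T hST
  dsimp only
  rw [← Set.union_eq_right.mpr hST, evalFrom_union]
  exact Set.subset_union_left

theorem subset_stepSet_of_forall_mem_step {S : Set σ} {a : α} (h : ∀ q ∈ S, q ∈ M.step q a) :
    S ⊆ M.stepSet S a :=
  fun q hq => M.mem_stepSet.2 ⟨q, hq, h q hq⟩

theorem evalFrom_append_subset_evalFrom_append_cons {S : Set σ} {u : List α} {a : α}
    (h : ∀ q ∈ M.evalFrom S u, q ∈ M.step q a) (v : List α) :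
    M.evalFrom S (u ++ v) ⊆ M.evalFrom S (u ++ a :: v) := by
  rw [evalFrom_append, evalFrom_append, evalFrom_cons]
  exact M.evalFrom_mono v (M.subset_stepSet_of_forall_mem_step h)

theorem append_cons_mem_accepts_of_forall_mem_step {u v : List α} {a : α}
    (h : ∀ q ∈ M.evalFrom M.start u, q ∈ M.step q a) (huv : u ++ v ∈ M.accepts) :
    u ++ a :: v ∈ M.accepts := by
  obtain ⟨q, hq, hqu⟩ := M.mem_accepts.1 huv
  exact M.mem_accepts.2 ⟨q, hq, M.evalFrom_append_subset_evalFrom_append_cons h v hqu⟩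

end NFA

/-- If an NFA accepts exactly `Σ* \ {w}` and `w = u a v`, then some state `q`
reachable from the initial states under `u` has no self-loop under `a`. -/
theorem stmt_15 {α σ : Type*} (M : NFA α σ) (w : List α)
    (hL : ∀ v, v ∈ M.accepts ↔ v ≠ w)
    (u : List α) (a : α) (v : List α) (hw : w = u ++ a :: v) :
    ∃ q ∈ M.evalFrom M.start u, q ∉ M.step q a := by
  by_contra! hloop
  have huv : u ++ v ∈ M.accepts := (hL _).2 fun h => by simpa [hw] using congrArg List.length h
  exact (hL w).1 (hw ▸ M.append_cons_mem_accepts_of_forall_mem_step hloop huv) rfl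
end

section
/- Removing from A_{k,n} the non-accepting states (k+1; i), ..., (2k; i) for all 1 ≤ i ≤ n (and all transitions incident to them) results in an automaton that accepts the same language Σ_n* \ {W_{k,n}}; that is, these states and the transitions into them are redundant for the accepted language. -/
/-- States of the automaton `A_{k,n}`: `some (j, m)` is the state `(j; m)`
(`0 ≤ j ≤ 2k`, `1 ≤ m ≤ n`), and `none` is the sink state `max`. -/
abbrev ASt : Type := Option (ℕ × ℕ)

/-- The transition function of `A_{k,n}` (closed form of rules 1–6 of the paper):
from `(j;m)` under `a_l`: a self-loop if `l < m`; if `l = m` then to `(j+1;m')`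
for all `m' ≤ m` when `j < k`, to `max` when `j ∈ {k, 2k}`, and to `(j+1;m)`
otherwise; if `l > m` then to `max` when `(j;m)` is accepting (`j < k`) and to
`(k+1; l)` otherwise. `max` has self-loops under all letters. -/
def Astep (k : ℕ) : ASt → ℕ → Set ASt
  | none, _ => {none}
  | some (j, m), l =>
    if l < m then {some (j, m)}
    else if l = m then
      if j < k then {s | ∃ m', 1 ≤ m' ∧ m' ≤ m ∧ s = some (j+1, m')}
      else if j = k ∨ j = 2*k then {none}
      else {some (j+1, m)}
    else
      if j < k then {none} else {some (k+1, l)}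

/-- The ptNFA `A_{k,n}` over `Σ_n = {1,...,n}`, with initial states `(0;m)` and
accepting states `max` and the `(j;m)` with `j < k`. -/
def Aaut (k n : ℕ) : NFA ℕ ASt where
  step := Astep k
  start := {s | ∃ m, 1 ≤ m ∧ m ≤ n ∧ s = some (0, m)}
  accept := {none} ∪ {s | ∃ j m, j < k ∧ 1 ≤ m ∧ m ≤ n ∧ s = some (j, m)}

/-- The restriction of `A_{k,n}` obtained by removing the non-accepting states
`(k+1; i), ..., (2k; i)` for `1 ≤ i ≤ n` and all transitions incident to them. -/
def Aaut' (k n : ℕ) : NFA ℕ ASt where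
  step q a := Astep k q a ∩ {s | ∀ j m, s = some (j, m) → j ≤ k}
  start := (Aaut k n).start ∩ {s | ∀ j m, s = some (j, m) → j ≤ k}
  accept := (Aaut k n).accept ∩ {s | ∀ j m, s = some (j, m) → j ≤ k}

/-!
Call a word heavy if it has a factor whose largest letter occurs in it more than `k` times.
In the restricted automaton, the words rejected from all states `(j; m)` with `j + K = k` and
`m ≤ t` are exactly the words `W K t ++ v` where `v` does not start with a letter `≤ t`; this
follows by induction on `K` and `t` from `W K (t+1) = W K t ++ (t+1) :: W (K-1) (t+1)`. Over
`Σ_n` only `W k n` is left. The restricted automaton accepts no more than `A_{k,n}`, and a run of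
`A_{k,n}` through a removed state `(k+1; b), …, (2k; b)` accepts only after reading `b` more than
`k` times with no larger letter in between, that is, on a heavy word; `W k n` is not heavy.
-/

namespace NFA

variable {α σ : Type*} (M : NFA α σ)

theorem mem_acceptsFrom_iff_exists_singleton {S : Set σ} {x : List α} :
    x ∈ M.acceptsFrom S ↔ ∃ s ∈ S, x ∈ M.acceptsFrom {s} := by
  simp only [mem_acceptsFrom, M.evalFrom_eq_biUnion_singleton S, Set.mem_iUnion]
  tauto

theorem nil_mem_acceptsFrom_singleton {s : σ} : [] ∈ M.acceptsFrom {s} ↔ s ∈ M.accept := by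
  simp

theorem cons_mem_acceptsFrom_singleton {s : σ} {a : α} {x : List α} :
    a :: x ∈ M.acceptsFrom {s} ↔ ∃ t ∈ M.step s a, x ∈ M.acceptsFrom {t} := by
  rw [cons_mem_acceptsFrom, stepSet_singleton, mem_acceptsFrom_iff_exists_singleton]

theorem mem_accepts_iff_exists_start {x : List α} :
    x ∈ M.accepts ↔ ∃ s ∈ M.start, x ∈ M.acceptsFrom {s} := by
  rw [accepts_eq_acceptsFrom_start, mem_acceptsFrom_iff_exists_singleton]

theorem accepts_mono {N : NFA α σ} (hstep : ∀ s a, M.step s a ⊆ N.step s a)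
    (hstart : M.start ⊆ N.start) (haccept : M.accept ⊆ N.accept) : M.accepts ≤ N.accepts := by
  have hevalFrom :
      ∀ (x : List α) {S T : Set σ}, S ⊆ T → M.evalFrom S x ⊆ N.evalFrom T x := by
    intro x
    induction x with
    | nil => exact id
    | cons a x ih =>
      intro S T hST
      refine ih fun s hs => ?_
      obtain ⟨t, ht, hs⟩ := M.mem_stepSet.mp hs
      exact N.mem_stepSet.mpr ⟨t, hST ht, hstep t a hs⟩
  rintro x ⟨s, hs, hx⟩
  exact ⟨s, haccept hs, hevalFrom x hstart hx⟩

end NFA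

theorem List.infix_or_infix_of_infix_append_cons {α : Type*} {q x y : List α} {z : α}
    (h : q <:+: x ++ z :: y) (hz : z ∉ q) : q <:+: x ∨ q <:+: y := by
  rcases List.infix_append_iff.mp h with h | h | ⟨q₁, q₂, rfl, hq₁, hq₂⟩
  · exact Or.inl h
  · rcases List.infix_cons_iff.mp h with h | h
    · rcases List.prefix_cons_iff.mp h with rfl | ⟨t, rfl, -⟩
      · exact Or.inl List.nil_infix
      · simp at hz
    · exact Or.inr h
  · rcases List.prefix_cons_iff.mp hq₂ with rfl | ⟨t, rfl, -⟩
    · exact Or.inl (by simpa using hq₁.isInfix)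
    · simp at hz

theorem W_zero_right (k : ℕ) : W k 0 = [] := by
  cases k <;> simp [W]

theorem mem_W {k n c : ℕ} (hc : c ∈ W k n) : 1 ≤ c ∧ c ≤ n := by
  induction k, n using W.induct with
  | case1 n => simp [W_zero_left] at hc
  | case2 k => simp [W_zero_right] at hc
  | case3 k n ihn ihk =>
    rw [W_succ_succ] at hc
    simp only [List.mem_append, List.mem_cons] at hc
    rcases hc with hc | rfl | hc
    · have := ihn hc
      omega
    · omega
    · exact ihk hc

theorem count_W_self (k : ℕ) {n : ℕ} (hn : 1 ≤ n) : (W k n).count n = k := by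
  obtain ⟨n, rfl⟩ := Nat.exists_eq_add_of_le' hn
  induction k with
  | zero => simp [W_zero_left]
  | succ k ih =>
    have hnot : n + 1 ∉ W (k + 1) n := fun h => by have := (mem_W h).2; omega
    rw [W_succ_succ, List.count_append, List.count_cons_self, List.count_eq_zero.mpr hnot, ih]
    omega

theorem exists_W_succ_eq_of_lt (K : ℕ) {m t : ℕ} (hmt : m < t) :
    ∃ Z, W (K + 1) t = W (K + 1) m ++ (m + 1) :: (W K (m + 1) ++ Z) ∧
      ∀ c ∈ Z.head?, m + 1 < c := by
  induction t, hmt using Nat.le_induction with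
  | base => exact ⟨[], by rw [W_succ_succ, List.append_nil], by simp⟩
  | succ t hmt ih =>
    obtain ⟨Z, hZ, hhead⟩ := ih
    refine ⟨Z ++ (t + 1) :: W K (t + 1), by rw [W_succ_succ, hZ]; simp, ?_⟩
    cases Z with
    | nil => simpa using hmt
    | cons c Z => simpa using hhead

def HasHeavyFactor (k : ℕ) (w : List ℕ) : Prop :=
  ∃ q b, q <:+: w ∧ (∀ c ∈ q, c ≤ b) ∧ k < q.count b

theorem HasHeavyFactor.mono {k : ℕ} {v w : List ℕ} (h : HasHeavyFactor k v) (hvw : v <:+: w) :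
    HasHeavyFactor k w :=
  let ⟨q, b, hq, hle, hcount⟩ := h
  ⟨q, b, hq.trans hvw, hle, hcount⟩

theorem count_le_of_infix_W {k n b : ℕ} {q : List ℕ} (hq : q <:+: W k n)
    (hle : ∀ c ∈ q, c ≤ b) : q.count b ≤ k := by
  induction k, n using W.induct generalizing q with
  | case1 n => simp_all [W_zero_left]
  | case2 k => simp_all [W_zero_right]
  | case3 k n ihn ihk =>
    rw [W_succ_succ] at hq
    rcases Nat.lt_or_ge b (n + 1) with hb | hb
    · have hnot : n + 1 ∉ q := fun h => by have := hle _ h; omega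
      rcases List.infix_or_infix_of_infix_append_cons hq hnot with h | h
      · exact ihn h hle
      · exact (ihk h hle).trans k.le_succ
    · rw [← W_succ_succ] at hq
      refine (hq.sublist.count_le b).trans ?_
      rcases hb.eq_or_lt with rfl | hb
      · rw [count_W_self _ (by omega)]
      · rw [List.count_eq_zero.mpr fun h => by have := (mem_W h).2; omega]
        omega

theorem not_hasHeavyFactor_W (k n : ℕ) : ¬ HasHeavyFactor k (W k n) := by
  rintro ⟨q, b, hq, hle, hcount⟩
  exact (count_le_of_infix_W hq hle).not_gt hcount

section

variable {k n : ℕ}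

theorem mem_Aaut_accept_some {j m : ℕ} :
    some (j, m) ∈ (Aaut k n).accept ↔ j < k ∧ 1 ≤ m ∧ m ≤ n := by
  simp [Aaut]

theorem mem_Aaut'_step {q s : ASt} {a : ℕ} :
    s ∈ (Aaut' k n).step q a ↔ s ∈ Astep k q a ∧ ∀ j m, s = some (j, m) → j ≤ k :=
  Iff.rfl

theorem mem_acceptsFrom_Aaut'_none (u : List ℕ) : u ∈ (Aaut' k n).acceptsFrom {none} := by
  induction u with
  | nil => simp [Aaut', Aaut]
  | cons a u ih =>
    exact (NFA.cons_mem_acceptsFrom_singleton _).mpr ⟨none, by simp [mem_Aaut'_step, Astep], ih⟩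

theorem nil_mem_acceptsFrom_Aaut' {j m : ℕ} :
    [] ∈ (Aaut' k n).acceptsFrom {some (j, m)} ↔ j < k ∧ 1 ≤ m ∧ m ≤ n := by
  rw [NFA.nil_mem_acceptsFrom_singleton, Aaut', Set.mem_inter_iff, mem_Aaut_accept_some]
  exact and_iff_left_of_imp fun h _ _ heq => by cases heq; exact h.1.le

theorem cons_mem_acceptsFrom_Aaut'_of_lt {j m a : ℕ} {u : List ℕ} (ham : a < m) (hj : j ≤ k) :
    a :: u ∈ (Aaut' k n).acceptsFrom {some (j, m)} ↔
      u ∈ (Aaut' k n).acceptsFrom {some (j, m)} := by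
  rw [NFA.cons_mem_acceptsFrom_singleton]
  simp [mem_Aaut'_step, Astep, ham, hj]

theorem cons_self_mem_acceptsFrom_Aaut' {j m : ℕ} {u : List ℕ} (hj : j < k) :
    m :: u ∈ (Aaut' k n).acceptsFrom {some (j, m)} ↔
      ∃ m', 1 ≤ m' ∧ m' ≤ m ∧ u ∈ (Aaut' k n).acceptsFrom {some (j + 1, m')} := by
  rw [NFA.cons_mem_acceptsFrom_singleton]
  simp [mem_Aaut'_step, Astep, hj, and_assoc]

theorem cons_self_mem_acceptsFrom_Aaut'_top {m : ℕ} (u : List ℕ) :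
    m :: u ∈ (Aaut' k n).acceptsFrom {some (k, m)} := by
  rw [NFA.cons_mem_acceptsFrom_singleton]
  simp [mem_Aaut'_step, Astep, mem_acceptsFrom_Aaut'_none]

theorem cons_mem_acceptsFrom_Aaut'_of_gt {j m a : ℕ} (u : List ℕ) (hma : m < a) (hj : j < k) :
    a :: u ∈ (Aaut' k n).acceptsFrom {some (j, m)} := by
  rw [NFA.cons_mem_acceptsFrom_singleton]
  simp [mem_Aaut'_step, Astep, hj, hma.not_gt, hma.ne', mem_acceptsFrom_Aaut'_none]

theorem cons_not_mem_acceptsFrom_Aaut'_top_of_gt {m a : ℕ} (u : List ℕ) (hma : m < a) :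
    a :: u ∉ (Aaut' k n).acceptsFrom {some (k, m)} := by
  rw [NFA.cons_mem_acceptsFrom_singleton]
  simp [mem_Aaut'_step, Astep, hma.not_gt, hma.ne']

theorem append_mem_acceptsFrom_Aaut'_of_lt {j m : ℕ} {p u : List ℕ} (hp : ∀ c ∈ p, c < m)
    (hj : j ≤ k) :
    p ++ u ∈ (Aaut' k n).acceptsFrom {some (j, m)} ↔
      u ∈ (Aaut' k n).acceptsFrom {some (j, m)} := by
  induction p with
  | nil => rfl
  | cons a p ih =>
    rw [List.cons_append, cons_mem_acceptsFrom_Aaut'_of_lt (hp a (by simp)) hj]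
    exact ih fun c hc => hp c (by simp [hc])

theorem W_append_not_mem_acceptsFrom_Aaut' {K j t m : ℕ} {v : List ℕ} (hjK : j + K = k)
    (hm : 1 ≤ m) (hmt : m ≤ t) (hv : ∀ c ∈ v.head?, t < c) :
    W K t ++ v ∉ (Aaut' k n).acceptsFrom {some (j, m)} := by
  induction K generalizing j t m v with
  | zero =>
    obtain rfl : j = k := hjK
    rw [W_zero_left, List.nil_append]
    cases v with
    | nil => rw [nil_mem_acceptsFrom_Aaut']; omega
    | cons c v => exact cons_not_mem_acceptsFrom_Aaut'_top_of_gt v (hmt.trans_lt (hv c rfl))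
  | succ K ih =>
    obtain ⟨m, rfl⟩ := Nat.exists_eq_add_of_le' hm
    have hj : j < k := by omega
    obtain ⟨Z, hW, hZ⟩ :=
      exists_W_succ_eq_of_lt K (show m < t by omega)
    have hZv : ∀ c ∈ (Z ++ v).head?, m + 1 < c := by
      cases Z with
      | nil => simpa using fun c hc => hmt.trans_lt (hv c hc)
      | cons c Z => simpa using hZ
    rw [hW, List.append_assoc, List.cons_append, List.append_assoc,
      append_mem_acceptsFrom_Aaut'_of_lt (fun c hc => by have := (mem_W hc).2; omega) hj.le,
      cons_self_mem_acceptsFrom_Aaut' hj]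
    rintro ⟨m', hm', hm'm, hacc⟩
    exact ih (by omega) hm' hm'm hZv hacc

theorem exists_eq_W_append_of_forall_not_mem_acceptsFrom_Aaut' {K j t : ℕ} {u : List ℕ}
    (hjK : j + K = k) (htn : t ≤ n) (hu : ∀ c ∈ u, 1 ≤ c)
    (hrej : ∀ m, 1 ≤ m → m ≤ t → u ∉ (Aaut' k n).acceptsFrom {some (j, m)}) :
    ∃ v, u = W K t ++ v ∧ ∀ c ∈ v.head?, t < c := by
  induction K generalizing j t u with
  | zero =>
    obtain rfl : j = k := hjK
    refine ⟨u, by rw [W_zero_left, List.nil_append], ?_⟩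
    cases u with
    | nil => simp
    | cons c u =>
      rintro _ ⟨⟩
      by_contra! hct
      exact hrej c (hu c (by simp)) hct (cons_self_mem_acceptsFrom_Aaut'_top u)
  | succ K ihK =>
    have hj : j < k := by omega
    induction t generalizing u with
    | zero =>
      refine ⟨u, by rw [W_zero_right, List.nil_append], ?_⟩
      cases u with
      | nil => simp
      | cons c u =>
        rintro _ ⟨⟩
        exact hu c (by simp)
    | succ t iht =>
      obtain ⟨v, rfl, hv⟩ := iht (by omega) hu fun m hm hmt => hrej m hm (by omega)
      have hrej' := hrej (t + 1) (by omega) le_rfl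
      rw [append_mem_acceptsFrom_Aaut'_of_lt (fun c hc => by have := (mem_W hc).2; omega)
        hj.le] at hrej'
      cases v with
      | nil => exact absurd (nil_mem_acceptsFrom_Aaut'.mpr ⟨hj, by omega, htn⟩) hrej'
      | cons c v =>
        obtain rfl | hc := Nat.eq_or_lt_of_le (hv c rfl)
        · rw [cons_self_mem_acceptsFrom_Aaut' hj] at hrej'
          obtain ⟨v', rfl, hv'⟩ := ihK (j := j + 1) (by omega) htn
            (fun c hc => hu c (by simp [hc])) fun m hm hmt hacc => hrej' ⟨m, hm, hmt, hacc⟩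
          exact ⟨v', by rw [W_succ_succ]; simp, hv'⟩
        · exact absurd (cons_mem_acceptsFrom_Aaut'_of_gt v hc hj) hrej'


/-- Here `pre` stands for the input read since the run last entered a removed state `(k+1; a)`:
it has no letter above `a` and at least `j - k` occurrences of `a`. -/
theorem hasHeavyFactor_of_mem_acceptsFrom_Aaut {j a : ℕ} {pre u : List ℕ} (hkj : k < j)
    (hpre : ∀ c ∈ pre, c ≤ a) (hcount : j ≤ k + pre.count a)
    (hacc : u ∈ (Aaut k n).acceptsFrom {some (j, a)}) : HasHeavyFactor k (pre ++ u) := by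
  induction u generalizing j a pre with
  | nil =>
    rw [NFA.nil_mem_acceptsFrom_singleton, mem_Aaut_accept_some] at hacc
    omega
  | cons c u ih =>
    obtain ⟨s, hs, hacc⟩ := (NFA.cons_mem_acceptsFrom_singleton _).mp hacc
    rcases lt_trichotomy c a with hca | rfl | hac
    · simp only [Aaut, Astep, if_pos hca, Set.mem_singleton_iff] at hs
      subst hs
      simpa using ih (pre := pre ++ [c]) hkj
        (List.forall_mem_append.mpr ⟨hpre, by simpa using hca.le⟩)
        (by rw [List.count_append]; omega) hacc
    · have hpre' : ∀ x ∈ pre ++ [c], x ≤ c := List.forall_mem_append.mpr ⟨hpre, by simp⟩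
      have hcount' : (pre ++ [c]).count c = pre.count c + 1 := by
        rw [List.count_append, List.count_singleton_self]
      by_cases h2k : j = 2 * k
      · exact ⟨pre ++ [c], c, ⟨[], u, by simp⟩, hpre', by omega⟩
      · simp only [Aaut, Astep, lt_irrefl, if_false, if_true, hkj.not_gt, hkj.ne', h2k, or_self,
          Set.mem_singleton_iff] at hs
        subst hs
        simpa using ih (pre := pre ++ [c]) (by omega) hpre' (by omega) hacc
    · simp only [Aaut, Astep, hac.not_gt, hac.ne', hkj.not_gt, if_false,
        Set.mem_singleton_iff] at hs
      subst hs
      exact (ih (pre := [c]) (by omega) (by simp) (by simp) hacc).mono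
        (List.infix_append_of_infix_right List.infix_rfl)

theorem mem_acceptsFrom_Aaut'_or_hasHeavyFactor {j m : ℕ} {u : List ℕ} (hj : j ≤ k)
    (hacc : u ∈ (Aaut k n).acceptsFrom {some (j, m)}) :
    u ∈ (Aaut' k n).acceptsFrom {some (j, m)} ∨ HasHeavyFactor k u := by
  induction u generalizing j m with
  | nil =>
    rw [NFA.nil_mem_acceptsFrom_singleton, mem_Aaut_accept_some] at hacc
    exact Or.inl (nil_mem_acceptsFrom_Aaut'.mpr hacc)
  | cons c u ih =>
    obtain ⟨s, hs, hacc⟩ := (NFA.cons_mem_acceptsFrom_singleton _).mp hacc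
    rcases lt_trichotomy c m with hcm | rfl | hmc
    · simp only [Aaut, Astep, if_pos hcm, Set.mem_singleton_iff] at hs
      subst hs
      rw [cons_mem_acceptsFrom_Aaut'_of_lt hcm hj]
      exact (ih hj hacc).imp_right fun h => h.mono (List.suffix_cons c u).isInfix
    · rcases hj.lt_or_eq with hj | rfl
      · simp only [Aaut, Astep, lt_irrefl, if_false, if_true, hj, Set.mem_ofPred_eq] at hs
        obtain ⟨m', hm', hm'c, rfl⟩ := hs
        rw [cons_self_mem_acceptsFrom_Aaut' hj]
        exact (ih hj hacc).imp (fun h => ⟨m', hm', hm'c, h⟩)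
          fun h => h.mono (List.suffix_cons c u).isInfix
      · exact Or.inl (cons_self_mem_acceptsFrom_Aaut'_top u)
    · rcases hj.lt_or_eq with hj | rfl
      · exact Or.inl (cons_mem_acceptsFrom_Aaut'_of_gt u hmc hj)
      · simp only [Aaut, Astep, hmc.not_gt, hmc.ne', lt_irrefl, if_false,
          Set.mem_singleton_iff] at hs
        subst hs
        exact Or.inr (hasHeavyFactor_of_mem_acceptsFrom_Aaut (pre := [c]) (by omega) (by simp)
          (by simp) hacc)

end

theorem W_not_mem_accepts_Aaut (k n : ℕ) : W k n ∉ (Aaut k n).accepts := by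
  rw [NFA.mem_accepts_iff_exists_start]
  rintro ⟨_, ⟨m, hm, hmn, rfl⟩, hacc⟩
  rcases mem_acceptsFrom_Aaut'_or_hasHeavyFactor k.zero_le hacc with h | h
  · exact W_append_not_mem_acceptsFrom_Aaut' (v := []) (zero_add k) hm hmn (by simp)
      (by rwa [List.append_nil])
  · exact not_hasHeavyFactor_W k n h

theorem mem_accepts_Aaut'_of_ne_W {k n : ℕ} {w : List ℕ} (hw : ∀ c ∈ w, 1 ≤ c ∧ c ≤ n)
    (hne : w ≠ W k n) : w ∈ (Aaut' k n).accepts := by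
  rw [NFA.mem_accepts_iff_exists_start]
  by_contra! hrej
  obtain ⟨v, rfl, hv⟩ :=
    exists_eq_W_append_of_forall_not_mem_acceptsFrom_Aaut' (zero_add k) le_rfl
      (fun c hc => (hw c hc).1) fun m hm hmn => hrej _ ⟨⟨m, hm, hmn, rfl⟩, by simp⟩
  cases v with
  | nil => exact hne (List.append_nil _)
  | cons c v => exact (hv c rfl).not_ge (hw c (by simp)).2

theorem stmt_17_general (k n : ℕ) (w : List ℕ)
    (hw : ∀ c ∈ w, 1 ≤ c ∧ c ≤ n) :
    (w ∈ (Aaut' k n).accepts ↔ w ∈ (Aaut k n).accepts) ∧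
    (w ∈ (Aaut' k n).accepts ↔ w ≠ W k n) := by
  have hsub : (Aaut' k n).accepts ≤ (Aaut k n).accepts :=
    NFA.accepts_mono _ (fun _ _ => Set.inter_subset_left) Set.inter_subset_left
      Set.inter_subset_left
  have hW : W k n ∉ (Aaut k n).accepts := W_not_mem_accepts_Aaut k n
  have hne : w ≠ W k n → w ∈ (Aaut' k n).accepts := mem_accepts_Aaut'_of_ne_W hw
  refine ⟨⟨fun h => hsub h, fun h => hne ?_⟩, ⟨fun h hwW => hW (hwW ▸ hsub h), hne⟩⟩
  rintro rfl
  exact hW h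

/-- Removing from `A_{k,n}` the non-accepting states `(k+1;i),...,(2k;i)` for
`1 ≤ i ≤ n` (and the incident transitions) yields an automaton accepting the
same language `Σ_n* \ {W_{k,n}}`. -/
theorem stmt_17 (k n : ℕ) (hk : 1 ≤ k) (hn : 1 ≤ n) (w : List ℕ)
    (hw : ∀ c ∈ w, 1 ≤ c ∧ c ≤ n) :
    (w ∈ (Aaut' k n).accepts ↔ w ∈ (Aaut k n).accepts) ∧
    (w ∈ (Aaut' k n).accepts ↔ w ≠ W k n) :=
  stmt_17_general k n w hw
end

section
/- If a universal word problem reduction holds — namely, the word W_{k,n} is the unique non-accepted word of A_{k,n} — then A_{k,n} rejects W_{k,n}: after reading the prefix W_{k,n-1} a_n, the automaton A_{k,n} can only be in one of the states (1;m) for 1 ≤ m ≤ n or in state (k+1;n), and from none of these states is the remaining suffix W_{k-1,n} accepted. -/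
/-!
On letters below its own index every state loops. Reading `W_{k,n-1}` therefore leaves `(0;n)`
in place, while from the other initial states it is a run of `A_{k,n-1}`, which ends in a
rejecting state `(j;m)` with `k ≤ j` and `m < n`; the letter `a_n` then leads to the states
`(1;m)` and to `(k+1;n)` respectively. From `(k+1;n)` the `k-1` letters `a_n` of `W_{k-1,n}`
climb to the rejecting state `(2k;n)`. From `(1;m)`, `A_{k,n}` one level up mimics `A_{k-1,n}`
from `(0;m)` as long as the latter stays at levels at most `2(k-1)`; since `max` is an accepting
sink and `A_{k-1,n}` rejects `W_{k-1,n}`, it does so along all of `W_{k-1,n}`, and its rejecting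
end states stay rejecting one level up.
-/

namespace NFA

variable {α σ τ : Type*}

theorem evalFrom_mono_s18 (M : NFA α σ) {S T : Set σ} (h : S ⊆ T) (w : List α) :
    M.evalFrom S w ⊆ M.evalFrom T w := by
  rw [← Set.union_eq_self_of_subset_left h, evalFrom_union]
  exact Set.subset_union_left

theorem mem_evalFrom_of_mem_step_self (M : NFA α σ) {s : σ} (hs : ∀ a, s ∈ M.step s a)
    {S : Set σ} (h : s ∈ S) (w : List α) : s ∈ M.evalFrom S w := by
  induction w generalizing S with
  | nil => exact h
  | cons a w ih => exact ih (mem_stepSet.2 ⟨s, h, hs a⟩)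

theorem evalFrom_subset_of_step_subset (M : NFA α σ) {I S : Set σ} {w : List α}
    (hI : ∀ s ∈ I, ∀ a ∈ w, M.step s a ⊆ I) (hS : S ⊆ I) : M.evalFrom S w ⊆ I := by
  induction w generalizing S with
  | nil => exact hS
  | cons a w ih =>
    refine ih (fun s hs b hb => hI s hs b (List.mem_cons_of_mem a hb)) ?_
    rintro t ht
    obtain ⟨s, hs, hts⟩ := mem_stepSet.1 ht
    exact hI s (hS hs) a List.mem_cons_self hts

theorem stepSet_image_subset {M₁ : NFA α σ} {M₂ : NFA α τ} (f : σ → τ) {S : Set σ} {a : α}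
    (h : ∀ s ∈ S, M₂.step (f s) a ⊆ f '' M₁.step s a) :
    M₂.stepSet (f '' S) a ⊆ f '' M₁.stepSet S a := by
  rintro t ht
  obtain ⟨_, ⟨s, hs, rfl⟩, hts⟩ := mem_stepSet.1 ht
  obtain ⟨u, hu, rfl⟩ := h s hs hts
  exact ⟨u, mem_stepSet.2 ⟨s, hs, hu⟩, rfl⟩

theorem evalFrom_image_subset {M₁ : NFA α σ} {M₂ : NFA α τ} (f : σ → τ) {I : Set σ}
    (hsim : ∀ s ∈ I, ∀ a, M₁.step s a ⊆ I → M₂.step (f s) a ⊆ f '' M₁.step s a)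
    {S : Set σ} {w : List α} (hrun : ∀ u, u <+: w → M₁.evalFrom S u ⊆ I) :
    M₂.evalFrom (f '' S) w ⊆ f '' M₁.evalFrom S w := by
  induction w generalizing S with
  | nil => exact subset_rfl
  | cons a w ih =>
    have hS : S ⊆ I := hrun [] List.nil_prefix
    have hstep : M₁.stepSet S a ⊆ I := hrun [a] (List.prefix_cons_inj a |>.2 List.nil_prefix)
    calc M₂.evalFrom (f '' S) (a :: w)
        ⊆ M₂.evalFrom (f '' M₁.stepSet S a) w :=
          M₂.evalFrom_mono_s18 (stepSet_image_subset f fun s hs => hsim s (hS hs) a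
            fun t ht => hstep (mem_stepSet.2 ⟨s, hs, ht⟩)) w
      _ ⊆ f '' M₁.evalFrom S (a :: w) :=
          ih fun u hu => hrun (a :: u) ((List.prefix_cons_inj a).2 hu)

end NFA

theorem one_le_and_le_of_mem_W {k n l : ℕ} (h : l ∈ W k n) : 1 ≤ l ∧ l ≤ n := by
  induction k, n using W.induct with
  | case1 => simp [W] at h
  | case2 => simp [W] at h
  | case3 k n ih₁ ih₂ =>
    rw [W_succ_succ, List.mem_append, List.mem_cons] at h
    rcases h with h | rfl | h
    · have := ih₁ h; omega
    · omega
    · exact ih₂ h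

theorem count_W_succ (k n : ℕ) : (W k (n + 1)).count (n + 1) = k := by
  induction k with
  | zero => simp [W]
  | succ k ih =>
    have hlow : (W (k + 1) n).count (n + 1) = 0 :=
      List.count_eq_zero.2 fun h => by have := one_le_and_le_of_mem_W h; omega
    simp [W_succ_succ, List.count_append, hlow, ih]

theorem Aaut_step (k n : ℕ) : (Aaut k n).step = Astep k := rfl

theorem Aaut_evalFrom_eq (k n n' : ℕ) : (Aaut k n).evalFrom = (Aaut k n').evalFrom := rfl

theorem Aaut_start_succ (k n : ℕ) :
    (Aaut k (n + 1)).start = insert (some (0, n + 1)) (Aaut k n).start := by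
  ext s
  simp only [Aaut, Set.mem_insert_iff]
  constructor
  · rintro ⟨m, hm₁, hm₂, rfl⟩
    rcases hm₂.lt_or_eq with hm₂ | rfl
    · exact .inr ⟨m, hm₁, by omega, rfl⟩
    · exact .inl rfl
  · rintro (rfl | ⟨m, hm₁, hm₂, rfl⟩)
    · exact ⟨n + 1, by omega, le_rfl, rfl⟩
    · exact ⟨m, hm₁, by omega, rfl⟩

theorem none_mem_evalFrom {k n : ℕ} {S : Set ASt} (h : none ∈ S) (w : List ℕ) :
    none ∈ (Aaut k n).evalFrom S w :=
  NFA.mem_evalFrom_of_mem_step_self _ (fun _ => rfl) h w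

theorem evalFrom_subset_of_forall_lt {k n j m : ℕ} {w : List ℕ} (hw : ∀ l ∈ w, l < m) :
    (Aaut k n).evalFrom {some (j, m)} w ⊆ {some (j, m)} :=
  NFA.evalFrom_subset_of_step_subset _ (by rintro _ rfl l hl; simp [Aaut, Astep, hw l hl])
    subset_rfl

theorem evalFrom_of_lt_level {k n j m : ℕ} {w : List ℕ} (hj : k < j)
    (hc : j + w.count m ≤ 2 * k) (hw : ∀ l ∈ w, l ≤ m) :
    (Aaut k n).evalFrom {some (j, m)} w = {some (j + w.count m, m)} := by
  induction w generalizing j with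
  | nil => simp
  | cons a w ih =>
    have hw' : ∀ l ∈ w, l ≤ m := fun l hl => hw l (List.mem_cons_of_mem a hl)
    rw [NFA.evalFrom_cons, NFA.stepSet_singleton, Aaut_step]
    rcases (hw a List.mem_cons_self).lt_or_eq with ha | rfl
    · have hstep : Astep k (some (j, m)) a = {some (j, m)} := by simp [Astep, ha]
      rw [List.count_cons_of_ne ha.ne] at hc ⊢
      rw [hstep]
      exact ih hj hc hw'
    · have hstep : Astep k (some (j, a)) a = {some (j + 1, a)} := by
        have hj' : ¬(j = k ∨ j = 2 * k) := by rw [List.count_cons_self] at hc; omega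
        simp [Astep, hj.not_gt, hj']
      rw [List.count_cons_self] at hc ⊢
      rw [show j + (w.count a + 1) = j + 1 + w.count a by omega, hstep]
      exact ih (by omega) (by omega) hw'

def colsLE (N : ℕ) : Set ASt := {s | ∀ j m, s = some (j, m) → 1 ≤ m ∧ m ≤ N}

theorem Astep_subset_colsLE {k N l : ℕ} {s : ASt} (hs : s ∈ colsLE N) (hl : 1 ≤ l ∧ l ≤ N) :
    Astep k s l ⊆ colsLE N := by
  rcases s with _ | ⟨j, m⟩
  · rintro _ rfl; simp [colsLE]
  have hm := hs j m rfl
  intro t ht j' m' rfl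
  simp only [Astep] at ht
  split_ifs at ht <;> simp_all; omega

theorem evalFrom_start_subset_colsLE {k n : ℕ} {w : List ℕ} (hw : ∀ l ∈ w, 1 ≤ l ∧ l ≤ n) :
    (Aaut k n).evalFrom (Aaut k n).start w ⊆ colsLE n :=
  NFA.evalFrom_subset_of_step_subset _ (fun _ hs l hl => Astep_subset_colsLE hs (hw l hl))
    (by rintro _ ⟨m, hm₁, hm₂, rfl⟩ j m' h; cases h; exact ⟨hm₁, hm₂⟩)

theorem exists_level_of_not_mem_accept {k n : ℕ} {s : ASt} (hs : s ∈ colsLE n)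
    (hacc : s ∉ (Aaut k n).accept) : ∃ j m, k ≤ j ∧ 1 ≤ m ∧ m ≤ n ∧ s = some (j, m) := by
  rcases s with _ | ⟨j, m⟩
  · exact absurd (.inl rfl) hacc
  obtain ⟨hm₁, hm₂⟩ := hs j m rfl
  exact ⟨j, m, not_lt.1 fun hj => hacc (.inr ⟨j, m, hj, hm₁, hm₂, rfl⟩), hm₁, hm₂, rfl⟩

theorem evalFrom_start_W_of_not_mem_accepts {k n : ℕ} (hrej : W k n ∉ (Aaut k n).accepts) :
    ∀ t ∈ (Aaut k (n + 1)).evalFrom (Aaut k (n + 1)).start (W k n),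
      t = some (0, n + 1) ∨ ∃ j m, k ≤ j ∧ 1 ≤ m ∧ m ≤ n ∧ t = some (j, m) := by
  intro t ht
  rw [Aaut_start_succ, Set.insert_eq, NFA.evalFrom_union] at ht
  rcases ht with ht | ht
  · exact .inl (evalFrom_subset_of_forall_lt
      (fun l hl => by have := one_le_and_le_of_mem_W hl; omega) ht)
  · rw [Aaut_evalFrom_eq k (n + 1) n] at ht
    exact .inr (exists_level_of_not_mem_accept
      (evalFrom_start_subset_colsLE (fun _ => one_le_and_le_of_mem_W) ht)
      fun hacc => hrej ⟨t, hacc, ht⟩)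

theorem evalFrom_start_W_append_of_not_mem_accepts {k n : ℕ} (hk : 0 < k)
    (hrej : W k n ∉ (Aaut k n).accepts) :
    ∀ q ∈ (Aaut k (n + 1)).evalFrom (Aaut k (n + 1)).start (W k n ++ [n + 1]),
      q = some (k + 1, n + 1) ∨ ∃ m, 1 ≤ m ∧ m ≤ n + 1 ∧ q = some (1, m) := by
  intro q hq
  rw [NFA.evalFrom_append, NFA.evalFrom_singleton, NFA.mem_stepSet] at hq
  obtain ⟨t, ht, hqt⟩ := hq
  rcases evalFrom_start_W_of_not_mem_accepts hrej t ht with rfl | ⟨j, m, hj, -, hm, rfl⟩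
  · right
    simpa [Aaut, Astep, hk] using hqt
  · left
    simpa [Aaut, Astep, hj.not_gt, show ¬n + 1 < m by omega, show n + 1 ≠ m by omega] using hqt

def levelsLE (J : ℕ) : Set ASt := {s | ∃ j m, j ≤ J ∧ s = some (j, m)}

def shift : ASt → ASt := Option.map fun p => (p.1 + 1, p.2)

theorem Astep_subset_insert_levelsLE {K l : ℕ} (hK : 1 ≤ K) {s : ASt}
    (hs : s ∈ insert none (levelsLE (2 * K))) : Astep K s l ⊆ insert none (levelsLE (2 * K)) := by
  rcases hs with rfl | ⟨j, m, hj, rfl⟩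
  · exact Set.singleton_subset_iff.2 (Set.mem_insert _ _)
  intro t ht
  simp only [Astep] at ht
  split_ifs at ht <;> grind [levelsLE]

/-- The hypothesis excludes the one transition that `A_{K+1}` does not mirror: on `a_m`, `A_K`
moves from `(2K;m)` to `max`, but `A_{K+1}` moves from `(2K+1;m)` to `(2K+2;m)`. -/
theorem Astep_succ_shift_subset {K l : ℕ} {s : ASt} (h : Astep K s l ⊆ levelsLE (2 * K)) :
    Astep (K + 1) (shift s) l ⊆ shift '' Astep K s l := by
  rcases s with _ | ⟨j, m⟩
  · obtain ⟨_, _, _, h⟩ := h rfl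
    cases h
  intro t ht
  simp only [shift, Option.map, Astep] at h ht ⊢
  split_ifs at h ht ⊢ <;> simp_all [levelsLE, Set.subset_def] <;> grind

theorem evalFrom_prefix_subset_levelsLE {K n : ℕ} (hK : 1 ≤ K) {S : Set ASt}
    (hS : S ⊆ levelsLE (2 * K)) {w : List ℕ} (hnone : none ∉ (Aaut K n).evalFrom S w) :
    ∀ u, u <+: w → (Aaut K n).evalFrom S u ⊆ levelsLE (2 * K) := by
  rintro u ⟨v, rfl⟩ t ht
  rcases NFA.evalFrom_subset_of_step_subset _
      (fun s hs a _ => Astep_subset_insert_levelsLE hK hs) (hS.trans (Set.subset_insert _ _)) ht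
    with rfl | ht'
  · exact absurd (by rw [NFA.evalFrom_append]; exact none_mem_evalFrom ht v) hnone
  · exact ht'

theorem evalFrom_shift_subset {K n : ℕ} (hK : 1 ≤ K) {S : Set ASt}
    (hS : S ⊆ levelsLE (2 * K)) {w : List ℕ} (hnone : none ∉ (Aaut K n).evalFrom S w) :
    (Aaut (K + 1) n).evalFrom (shift '' S) w ⊆ shift '' (Aaut K n).evalFrom S w :=
  NFA.evalFrom_image_subset shift (fun _ _ _ => Astep_succ_shift_subset)
    (evalFrom_prefix_subset_levelsLE hK hS hnone)

theorem mem_accept_of_shift_mem_accept {K n : ℕ} {s : ASt}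
    (h : shift s ∈ (Aaut (K + 1) n).accept) : s ∈ (Aaut K n).accept := by
  rcases s with _ | ⟨j, m⟩
  · exact .inl rfl
  obtain h | ⟨j', m', hj', hm₁, hm₂, h⟩ := h
  · cases h
  · simp only [shift, Option.map, Option.some.injEq, Prod.mk.injEq] at h
    exact .inr ⟨j, m, by omega, by omega, by omega, rfl⟩

theorem evalFrom_level_one_W_not_mem_accept {K n m : ℕ} (hrej : W K n ∉ (Aaut K n).accepts)
    (hm₁ : 1 ≤ m) (hm₂ : m ≤ n) :
    ∀ f ∈ (Aaut (K + 1) n).evalFrom {some (1, m)} (W K n), f ∉ (Aaut (K + 1) n).accept := by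
  rcases Nat.eq_zero_or_pos K with rfl | hK
  · simp [W, Aaut]
  intro f hf hacc
  have hstart : {some (1, m)} ⊆ shift '' (Aaut K n).start :=
    Set.singleton_subset_iff.2 ⟨some (0, m), ⟨m, hm₁, hm₂, rfl⟩, rfl⟩
  have hlevels : (Aaut K n).start ⊆ levelsLE (2 * K) := by
    rintro _ ⟨m, -, -, rfl⟩
    exact ⟨0, m, Nat.zero_le _, rfl⟩
  obtain ⟨s, hs, rfl⟩ := evalFrom_shift_subset hK hlevels (fun h => hrej ⟨none, .inl rfl, h⟩)
    (NFA.evalFrom_mono_s18 _ hstart _ hf)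
  exact hrej ⟨s, mem_accept_of_shift_mem_accept hacc, hs⟩

theorem evalFrom_top_W_not_mem_accept {k n : ℕ} :
    ∀ f ∈ (Aaut (k + 1) (n + 1)).evalFrom {some (k + 1 + 1, n + 1)} (W k (n + 1)),
      f ∉ (Aaut (k + 1) (n + 1)).accept := by
  have hfinal := evalFrom_of_lt_level (k := k + 1) (n := n + 1) (j := k + 1 + 1) (m := n + 1)
    (w := W k (n + 1)) (by omega) (by rw [count_W_succ]; omega)
    (fun l hl => (one_le_and_le_of_mem_W hl).2)
  rw [hfinal, count_W_succ]
  rintro f rfl (h | ⟨j, m, hj, -, -, h⟩)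
  · cases h
  · simp only [Option.some.injEq, Prod.mk.injEq] at h
    omega

/-- Given the induction hypotheses that `A_{k,n-1}` rejects `W_{k,n-1}` and that
`A_{k-1,n}` rejects `W_{k-1,n}`, the automaton `A_{k,n}` rejects `W_{k,n}`:
after reading `W_{k,n-1} a_n` it can only be in one of the states `(1;m)`,
`1 ≤ m ≤ n`, or `(k+1;n)`, and from none of these states is the remaining
suffix `W_{k-1,n}` accepted. -/
theorem stmt_18 (k n : ℕ) (hk : 1 ≤ k) (hn : 2 ≤ n)
    (ih1 : W k (n - 1) ∉ (Aaut k (n - 1)).accepts)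
    (ih2 : W (k - 1) n ∉ (Aaut (k - 1) n).accepts) :
    (∀ q ∈ (Aaut k n).evalFrom (Aaut k n).start (W k (n - 1) ++ [n]),
        q = some (k + 1, n) ∨ ∃ m, 1 ≤ m ∧ m ≤ n ∧ q = some (1, m)) ∧
    (∀ q : ASt, (q = some (k + 1, n) ∨ ∃ m, 1 ≤ m ∧ m ≤ n ∧ q = some (1, m)) →
        ∀ f ∈ (Aaut k n).evalFrom {q} (W (k - 1) n), f ∉ (Aaut k n).accept) ∧
    W k n ∉ (Aaut k n).accepts := by
  obtain ⟨n, rfl⟩ : ∃ n', n = n' + 1 := ⟨n - 1, by omega⟩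
  obtain ⟨k, rfl⟩ : ∃ k', k = k' + 1 := ⟨k - 1, by omega⟩
  simp only [Nat.add_sub_cancel] at ih1 ih2 ⊢
  have after_prefix := evalFrom_start_W_append_of_not_mem_accepts (by omega) ih1
  have after_suffix : ∀ q : ASt,
      (q = some (k + 1 + 1, n + 1) ∨ ∃ m, 1 ≤ m ∧ m ≤ n + 1 ∧ q = some (1, m)) →
      ∀ f ∈ (Aaut (k + 1) (n + 1)).evalFrom {q} (W k (n + 1)),
        f ∉ (Aaut (k + 1) (n + 1)).accept := by
    rintro q (rfl | ⟨m, hm₁, hm₂, rfl⟩)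
    · exact evalFrom_top_W_not_mem_accept
    · exact evalFrom_level_one_W_not_mem_accept ih2 hm₁ hm₂
  refine ⟨after_prefix, after_suffix, ?_⟩
  rintro ⟨f, hf, hfW⟩
  rw [NFA.eval, W_succ_succ, ← List.singleton_append, ← List.append_assoc,
    NFA.evalFrom_append] at hfW
  obtain ⟨q, hq, hfq⟩ := NFA.mem_evalFrom_iff_exists.1 hfW
  exact after_suffix q (after_prefix q hq) f hfq hf
end
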